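/- arXiv:1210.4654 — 10 statements merged into one kernel-verified Lean document; each statement's English description precedes it below -/
import Mathlib

section
/- Under consistency, sequential ignorability and positivity, the mean of the counterfactual Y_{1,M_0} equals the mediation functional: E[Y_{1,M_0}] = θ0 = Σ_{m∈𝒮, x∈𝒳, P(X=x)>0} E(Y | E=1, M=m, X=x) · P(M=m | E=0, X=x) · P(X=x). -/
/-!
Stratify by the covariate value `x` and by the value `m` of `M_0`. Inside the stratum `X = x`,
ignorability (i) lets one additionally condition on `E = 0` (for the pair `(Y_{1,m}, M_0)`) or on
`E = 1` (for `Y_{1,m}`) without changing conditional means; consistency then turns `M_0` into `M`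
and `Y_{1,m}` into `Y`, and ignorability (ii) lets one add or drop the event `M = m`. Both sides of
the identity thereby reduce to `∑ E(Y_{1,m} | X = x) · P(M = m | E = 0, X = x) · P(X = x)`.
-/

open MeasureTheory ProbabilityTheory

/-- Conditional probability of `B` given the event `A`: `P(B ∩ A) / P(A)`. -/
noncomputable def cP {Ω : Type*} [MeasurableSpace Ω] (μ : Measure Ω) (B A : Set Ω) : ℝ :=
  (μ (B ∩ A)).toReal / (μ A).toReal

/-- Conditional expectation of `Y` given the event `A`: `E[Y·1_A] / P(A)`. -/
noncomputable def cE {Ω : Type*} [MeasurableSpace Ω] (μ : Measure Ω) (Y : Ω → ℝ) (A : Set Ω) : ℝ :=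
  (∫ ω in A, Y ω ∂μ) / (μ A).toReal

open Classical in
/-- The mediation functional
`θ0 = Σ_{m, x : P(X=x)>0} E(Y | E=1, M=m, X=x) · P(M=m | E=0, X=x) · P(X=x)`. -/
noncomputable def theta0 {Ω 𝒳 𝒮 : Type*} [MeasurableSpace Ω] [Fintype 𝒳] [Fintype 𝒮]
    (μ : Measure Ω) (X : Ω → 𝒳) (M : Ω → 𝒮) (E : Ω → Bool) (Y : Ω → ℝ) : ℝ :=
  ∑ m : 𝒮, ∑ x ∈ Finset.univ.filter (fun x => μ (X ⁻¹' {x}) ≠ 0),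
    cE μ Y (E ⁻¹' {true} ∩ M ⁻¹' {m} ∩ X ⁻¹' {x}) *
      cP μ (M ⁻¹' {m}) (E ⁻¹' {false} ∩ X ⁻¹' {x}) *
      (μ (X ⁻¹' {x})).toReal

section ConditionalMean

variable {Ω β : Type*} [MeasurableSpace Ω] [MeasurableSpace β] {μ : Measure Ω}
  {f : Ω → ℝ} {s t : Set Ω}

-- Both sides are `0` when `μ s` is `0` or `∞`.
lemma cE_eq_integral_cond (μ : Measure Ω) (f : Ω → ℝ) (s : Set Ω) :
    cE μ f s = ∫ ω, f ω ∂μ[|s] := by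
  rw [cE, ProbabilityTheory.cond, integral_smul_measure, ENNReal.toReal_inv, smul_eq_mul,
    div_eq_inv_mul]

lemma setIntegral_eq_cE_mul [IsFiniteMeasure μ] (f : Ω → ℝ) (s : Set Ω) :
    ∫ ω in s, f ω ∂μ = cE μ f s * (μ s).toReal := by
  rcases eq_or_ne (μ s) 0 with hs | hs
  · simp [Measure.restrict_eq_zero.mpr hs, hs]
  · rw [cE, div_mul_cancel₀]
    exact ENNReal.toReal_ne_zero.mpr ⟨hs, measure_ne_top μ s⟩

lemma cE_congr_ae {g : Ω → ℝ} (hs : MeasurableSet s) (h : ∀ᵐ ω ∂μ, ω ∈ s → f ω = g ω) :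
    cE μ f s = cE μ g s := by
  rw [cE, cE, setIntegral_congr_ae hs h]

lemma cE_indicator [IsFiniteMeasure μ] (ht : MeasurableSet t) (f : Ω → ℝ) (s : Set Ω) :
    cE μ (t.indicator f) s = cE μ f (t ∩ s) * cP μ t s := by
  rw [cE, setIntegral_indicator ht, Set.inter_comm, setIntegral_eq_cE_mul, cP, mul_div_assoc]

lemma ProbabilityTheory.IndepFun.setIntegral_preimage_eq_mul {g : Ω → β} [IsProbabilityMeasure μ]
    (hfg : IndepFun f g μ) (hf : AEMeasurable f μ) (hg : Measurable g)
    {T : Set β} (hT : MeasurableSet T) :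
    ∫ ω in g ⁻¹' T, f ω ∂μ = (∫ ω, f ω ∂μ) * μ.real (g ⁻¹' T) := by
  have h := hfg.integral_fun_comp_mul_comp (f := id) (g := T.indicator 1) hf hg.aemeasurable
    aestronglyMeasurable_id (measurable_const.indicator hT).aestronglyMeasurable
  have hpre : ∀ ω, T.indicator (1 : β → ℝ) (g ω) = (g ⁻¹' T).indicator 1 ω := fun ω => rfl
  simpa only [id, hpre, ← Set.indicator_mul_right, Pi.one_apply, mul_one,
    integral_indicator (hg hT), setIntegral_const, smul_eq_mul] using h

lemma ProbabilityTheory.IndepFun.integral_cond_preimage {g : Ω → β} [IsProbabilityMeasure μ]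
    (hfg : IndepFun f g μ) (hf : AEMeasurable f μ) (hg : Measurable g)
    {T : Set β} (hT : MeasurableSet T) (hμT : μ (g ⁻¹' T) ≠ 0) :
    ∫ ω, f ω ∂μ[|g ⁻¹' T] = ∫ ω, f ω ∂μ := by
  rw [← cE_eq_integral_cond, cE, hfg.setIntegral_preimage_eq_mul hf hg hT, Measure.real,
    mul_div_cancel_right₀]
  exact ENNReal.toReal_ne_zero.mpr ⟨hμT, measure_ne_top μ _⟩

lemma cE_inter_preimage_of_indepFun [IsFiniteMeasure μ] {g : Ω → β} {T : Set β}
    (hs : MeasurableSet s) (hg : Measurable g) (hT : MeasurableSet T)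
    (hf : AEMeasurable f μ) (hfg : IndepFun f g μ[|s]) (hμ : μ (g ⁻¹' T ∩ s) ≠ 0) :
    cE μ f (g ⁻¹' T ∩ s) = cE μ f s := by
  have hs0 : μ s ≠ 0 := fun h => hμ (measure_mono_null Set.inter_subset_right h)
  have := cond_isProbabilityMeasure (μ := μ) hs0
  have hμT : μ[|s] (g ⁻¹' T) ≠ 0 :=
    (cond_pos_of_inter_ne_zero hs (by rwa [Set.inter_comm])).ne'
  rw [cE_eq_integral_cond, cE_eq_integral_cond, Set.inter_comm,
    ← cond_cond_eq_cond_inter hs (hg hT),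
    hfg.integral_cond_preimage (hf.mono_ac cond_absolutelyContinuous) hg hT hμT]

lemma cE_inter_preimage_inter_preimage_of_indepFun {γ : Type*} [MeasurableSpace γ]
    [IsFiniteMeasure μ] {g : Ω → β} {h : Ω → γ} {T : Set β} {U : Set γ}
    (hs : MeasurableSet s) (hg : Measurable g) (hh : Measurable h)
    (hT : MeasurableSet T) (hU : MeasurableSet U) (hf : AEMeasurable f μ)
    (hfg : IndepFun f g μ[|s]) (hfh : IndepFun f h μ[|g ⁻¹' T ∩ s])
    (hμ : μ (h ⁻¹' U ∩ g ⁻¹' T ∩ s) ≠ 0) :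
    cE μ f (h ⁻¹' U ∩ g ⁻¹' T ∩ s) = cE μ f s := by
  rw [Set.inter_assoc] at hμ ⊢
  rw [cE_inter_preimage_of_indepFun ((hg hT).inter hs) hh hU hf hfh hμ,
    cE_inter_preimage_of_indepFun hs hg hT hf hfg
      fun h0 => hμ (measure_mono_null Set.inter_subset_right h0)]

end ConditionalMean

section Partition

variable {Ω β : Type*} [MeasurableSpace Ω] [MeasurableSpace β] [Fintype β]
  [MeasurableSingletonClass β] {μ : Measure Ω}

lemma integral_eq_sum_setIntegral_fiber {f : Ω → ℝ} {X : Ω → β} (hX : Measurable X)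
    (hf : ∀ b, IntegrableOn f (X ⁻¹' {b}) μ) :
    ∫ ω, f ω ∂μ = ∑ b, ∫ ω in X ⁻¹' {b}, f ω ∂μ := by
  rw [← integral_iUnion_fintype (fun b => hX (measurableSet_singleton b))
    (pairwise_disjoint_fiber X) hf, ← Set.preimage_iUnion, Set.iUnion_of_singleton,
    Set.preimage_univ, Measure.restrict_univ]

lemma integral_comp_eq_sum_integral_indicator {F : β → Ω → ℝ} {Z : Ω → β} (hZ : Measurable Z)
    (hF : ∀ b, Integrable (F b) μ) :
    ∫ ω, F (Z ω) ω ∂μ = ∑ b, ∫ ω, (Z ⁻¹' {b}).indicator (F b) ω ∂μ := by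
  have hfiber : ∀ b, Set.EqOn (fun ω => F (Z ω) ω) (F b) (Z ⁻¹' {b}) :=
    fun b ω (hω : Z ω = b) => by simp only [hω]
  rw [integral_eq_sum_setIntegral_fiber hZ fun b =>
    (hF b).integrableOn.congr_fun (hfiber b).symm (hZ (measurableSet_singleton b))]
  refine Finset.sum_congr rfl fun b _ => ?_
  rw [integral_indicator (hZ (measurableSet_singleton b)),
    setIntegral_congr_fun (hZ (measurableSet_singleton b)) (hfiber b)]

open Classical in
lemma integral_eq_sum_cE_mul [IsFiniteMeasure μ] {f : Ω → ℝ} {X : Ω → β} (hX : Measurable X)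
    (hf : Integrable f μ) :
    ∫ ω, f ω ∂μ = ∑ b ∈ Finset.univ.filter (fun b => μ (X ⁻¹' {b}) ≠ 0),
      cE μ f (X ⁻¹' {b}) * (μ (X ⁻¹' {b})).toReal := by
  rw [integral_eq_sum_setIntegral_fiber hX fun b => hf.integrableOn, Finset.sum_filter_of_ne]
  · exact Finset.sum_congr rfl fun b _ => setIntegral_eq_cE_mul f _
  · intro b _ hb h
    simp [h] at hb

end Partition

section Mediation

variable {Ω 𝒳 𝒮 : Type*} [MeasurableSpace Ω] [MeasurableSpace 𝒳] [MeasurableSingletonClass 𝒳]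
  [MeasurableSpace 𝒮] [MeasurableSingletonClass 𝒮] {μ : Measure Ω} [IsFiniteMeasure μ]
  {X : Ω → 𝒳} {M : Ω → 𝒮} {E : Ω → Bool} {x : 𝒳} {m : 𝒮} {e : Bool}

lemma cE_observed_eq_cE_counterfactual {Y Ym : Ω → ℝ}
    (hX : Measurable X) (hM : Measurable M) (hE : Measurable E) (hYm : AEMeasurable Ym μ)
    (hpos : μ (M ⁻¹' {m} ∩ E ⁻¹' {e} ∩ X ⁻¹' {x}) ≠ 0)
    (hcons : ∀ᵐ ω ∂μ, E ω = e → M ω = m → Ym ω = Y ω)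
    (hindE : IndepFun Ym E μ[|X ⁻¹' {x}]) (hindM : IndepFun Ym M μ[|E ⁻¹' {e} ∩ X ⁻¹' {x}]) :
    cE μ Y (E ⁻¹' {e} ∩ M ⁻¹' {m} ∩ X ⁻¹' {x}) = cE μ Ym (X ⁻¹' {x}) := by
  have hmeas : MeasurableSet (M ⁻¹' {m} ∩ E ⁻¹' {e} ∩ X ⁻¹' {x}) :=
    ((hM (measurableSet_singleton m)).inter (hE (measurableSet_singleton e))).inter
      (hX (measurableSet_singleton x))
  rw [Set.inter_comm (E ⁻¹' {e}), ← cE_inter_preimage_inter_preimage_of_indepFun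
    (hX (measurableSet_singleton x)) hE hM (measurableSet_singleton e)
    (measurableSet_singleton m) hYm hindE hindM hpos]
  refine cE_congr_ae hmeas ?_
  filter_upwards [hcons] with ω hω ⟨⟨hωM, hωE⟩, _⟩
  exact (hω hωE hωM).symm

lemma cE_indicator_counterfactual_mediator_eq {Ym : Ω → ℝ} {Mce : Ω → 𝒮}
    (hX : Measurable X) (hM : Measurable M) (hE : Measurable E) (hMce : Measurable Mce)
    (hYm : AEMeasurable Ym μ) (hpos : μ (M ⁻¹' {m} ∩ E ⁻¹' {e} ∩ X ⁻¹' {x}) ≠ 0)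
    (hcons : ∀ᵐ ω ∂μ, E ω = e → Mce ω = M ω)
    (hindE : IndepFun (fun ω => (Ym ω, Mce ω)) E μ[|X ⁻¹' {x}])
    (hindM : IndepFun Ym M μ[|E ⁻¹' {e} ∩ X ⁻¹' {x}]) :
    cE μ ((Mce ⁻¹' {m}).indicator Ym) (X ⁻¹' {x}) =
      cE μ Ym (X ⁻¹' {x}) * cP μ (M ⁻¹' {m}) (E ⁻¹' {e} ∩ X ⁻¹' {x}) := by
  have hsX := hX (measurableSet_singleton x)
  have hsE := hE (measurableSet_singleton e)
  have hsM := hM (measurableSet_singleton m)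
  have hind : IndepFun ((Mce ⁻¹' {m}).indicator Ym) E μ[|X ⁻¹' {x}] := by
    have hφ : Measurable ((Set.univ ×ˢ {m}).indicator (Prod.fst : ℝ × 𝒮 → ℝ)) :=
      measurable_fst.indicator (MeasurableSet.univ.prod (measurableSet_singleton m))
    have hcomp : (Mce ⁻¹' {m}).indicator Ym =
        (Set.univ ×ˢ {m}).indicator Prod.fst ∘ fun ω => (Ym ω, Mce ω) := by
      ext ω
      by_cases h : Mce ω = m <;> simp [h]
    rw [hcomp]
    exact hindE.comp hφ measurable_id
  have hposE : μ (E ⁻¹' {e} ∩ X ⁻¹' {x}) ≠ 0 := fun h0 =>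
    hpos (measure_mono_null (by rw [Set.inter_assoc]; exact Set.inter_subset_right) h0)
  calc cE μ ((Mce ⁻¹' {m}).indicator Ym) (X ⁻¹' {x})
      = cE μ ((Mce ⁻¹' {m}).indicator Ym) (E ⁻¹' {e} ∩ X ⁻¹' {x}) :=
        (cE_inter_preimage_of_indepFun hsX hE (measurableSet_singleton e)
          (hYm.indicator (hMce (measurableSet_singleton m))) hind hposE).symm
    _ = cE μ ((M ⁻¹' {m}).indicator Ym) (E ⁻¹' {e} ∩ X ⁻¹' {x}) := by
        classical
        refine cE_congr_ae (hsE.inter hsX) ?_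
        filter_upwards [hcons] with ω hω ⟨hωE, _⟩
        have hMω : Mce ω = M ω := hω hωE
        simp only [Set.indicator, Set.mem_preimage, hMω]
    _ = cE μ Ym (M ⁻¹' {m} ∩ E ⁻¹' {e} ∩ X ⁻¹' {x}) *
          cP μ (M ⁻¹' {m}) (E ⁻¹' {e} ∩ X ⁻¹' {x}) := by
        rw [cE_indicator hsM, Set.inter_assoc]
    _ = cE μ Ym (X ⁻¹' {x}) * cP μ (M ⁻¹' {m}) (E ⁻¹' {e} ∩ X ⁻¹' {x}) := by
        rw [cE_inter_preimage_inter_preimage_of_indepFun hsX hE hM (measurableSet_singleton e)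
          (measurableSet_singleton m) hYm (hindE.comp measurable_fst measurable_id) hindM hpos]

end Mediation

theorem mediation_identification_general
    {Ω 𝒳 𝒮 : Type*} [MeasurableSpace Ω] [Fintype 𝒳] [Fintype 𝒮]
    [MeasurableSpace 𝒳] [MeasurableSingletonClass 𝒳]
    [MeasurableSpace 𝒮] [MeasurableSingletonClass 𝒮]
    (μ : Measure Ω) [IsProbabilityMeasure μ]
    (X : Ω → 𝒳) (M : Ω → 𝒮) (E : Ω → Bool) (Y : Ω → ℝ)
    (hX : Measurable X) (hM : Measurable M) (hE : Measurable E)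
    -- counterfactuals: `Yc e m = Y_{e,m}` and `Mc e = M_e`
    (Yc : Bool → 𝒮 → Ω → ℝ) (Mc : Bool → Ω → 𝒮)
    (hYc : ∀ e m, Integrable (Yc e m) μ) (hMc : ∀ e, Measurable (Mc e))
    -- positivity
    (hposM : ∀ (m : 𝒮) (e : Bool) (x : 𝒳), μ (X ⁻¹' {x}) ≠ 0 →
      μ (M ⁻¹' {m} ∩ E ⁻¹' {e} ∩ X ⁻¹' {x}) ≠ 0)
    -- consistency
    (hconsM : ∀ e : Bool, ∀ᵐ ω ∂μ, E ω = e → Mc e ω = M ω)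
    (hconsY : ∀ (e : Bool) (m : 𝒮), ∀ᵐ ω ∂μ, E ω = e → M ω = m → Yc e m ω = Y ω)
    -- sequential ignorability (i): ((Y_{e',m'})_{m'}, M_e) ⫫ E | X
    (hSI1 : ∀ (e e' : Bool) (x : 𝒳), μ (X ⁻¹' {x}) ≠ 0 →
      IndepFun (fun ω => ((fun m => Yc e' m ω), Mc e ω)) E (μ[|X ⁻¹' {x}]))
    -- sequential ignorability (ii): Y_{e',m} ⫫ M | (E, X)
    (hSI2 : ∀ (e' e : Bool) (m : 𝒮) (x : 𝒳), μ (X ⁻¹' {x}) ≠ 0 →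
      IndepFun (Yc e' m) M (μ[|E ⁻¹' {e} ∩ X ⁻¹' {x}])) :
    ∫ ω, Yc true (Mc false ω) ω ∂μ = theta0 μ X M E Y := by
  rw [integral_comp_eq_sum_integral_indicator (hMc false) (hYc true), theta0]
  refine Finset.sum_congr rfl fun m _ => ?_
  rw [integral_eq_sum_cE_mul hX ((hYc true m).indicator (hMc false (measurableSet_singleton m)))]
  refine Finset.sum_congr rfl fun x hx => ?_
  replace hx : μ (X ⁻¹' {x}) ≠ 0 := (Finset.mem_filter.mp hx).2
  have hYm := (hYc true m).aemeasurable
  rw [cE_indicator_counterfactual_mediator_eq hX hM hE (hMc false) hYm (hposM m false x hx)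
      (hconsM false) ((hSI1 false true x hx).comp (measurable_pi_apply m |>.prodMap measurable_id)
        measurable_id) (hSI2 true false m x hx),
    cE_observed_eq_cE_counterfactual hX hM hE hYm (hposM m true x hx) (hconsY true m)
      ((hSI1 false true x hx).comp (measurable_pi_apply m |>.comp measurable_fst) measurable_id)
      (hSI2 true true m x hx)]

/-- under consistency, sequential ignorability and positivity,
`E[Y_{1,M_0}] = θ0`. -/
theorem mediation_identification
    {Ω 𝒳 𝒮 : Type*} [MeasurableSpace Ω] [Fintype 𝒳] [Fintype 𝒮]
    [MeasurableSpace 𝒳] [MeasurableSingletonClass 𝒳]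
    [MeasurableSpace 𝒮] [MeasurableSingletonClass 𝒮]
    (μ : Measure Ω) [IsProbabilityMeasure μ]
    (X : Ω → 𝒳) (M : Ω → 𝒮) (E : Ω → Bool) (Y : Ω → ℝ)
    (hX : Measurable X) (hM : Measurable M) (hE : Measurable E)
    (hY : Integrable Y μ)
    -- counterfactuals: `Yc e m = Y_{e,m}` and `Mc e = M_e`
    (Yc : Bool → 𝒮 → Ω → ℝ) (Mc : Bool → Ω → 𝒮)
    (hYc : ∀ e m, Integrable (Yc e m) μ) (hMc : ∀ e, Measurable (Mc e))
    -- positivity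
    (hposE : ∀ (e : Bool) (x : 𝒳), μ (X ⁻¹' {x}) ≠ 0 → μ (E ⁻¹' {e} ∩ X ⁻¹' {x}) ≠ 0)
    (hposM : ∀ (m : 𝒮) (e : Bool) (x : 𝒳), μ (X ⁻¹' {x}) ≠ 0 →
      μ (M ⁻¹' {m} ∩ E ⁻¹' {e} ∩ X ⁻¹' {x}) ≠ 0)
    -- consistency
    (hconsM : ∀ e : Bool, ∀ᵐ ω ∂μ, E ω = e → Mc e ω = M ω)
    (hconsY : ∀ (e : Bool) (m : 𝒮), ∀ᵐ ω ∂μ, E ω = e → M ω = m → Yc e m ω = Y ω)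
    -- sequential ignorability (i): ((Y_{e',m'})_{m'}, M_e) ⫫ E | X
    (hSI1 : ∀ (e e' : Bool) (x : 𝒳), μ (X ⁻¹' {x}) ≠ 0 →
      IndepFun (fun ω => ((fun m => Yc e' m ω), Mc e ω)) E (μ[|X ⁻¹' {x}]))
    -- sequential ignorability (ii): Y_{e',m} ⫫ M | (E, X)
    (hSI2 : ∀ (e' e : Bool) (m : 𝒮) (x : 𝒳), μ (X ⁻¹' {x}) ≠ 0 →
      IndepFun (Yc e' m) M (μ[|E ⁻¹' {e} ∩ X ⁻¹' {x}])) :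
    ∫ ω, Yc true (Mc false ω) ω ∂μ = theta0 μ X M E Y :=
  mediation_identification_general μ X M E Y hX hM hE Yc Mc hYc hMc hposM hconsM hconsY hSI1 hSI2
end

section
/- The mediation functional admits the outcome-propensity representation (the paper's Strategy 2): θ0 = E[ (1{E=0}/P(E=0|X)) · b(M,X) ], where b(m,x) := E(Y | E=1, M=m, X=x) and the expectation is over the observed-data distribution. -/
/-!
All random variables except `Y` are finite-valued, so the right-hand side is a finite sum over the
cells `{M = m, E = 0, X = x}`, each weighted by `b(m,x) / P(E=0 | X=x)`. Since
`P(M=m, E=0, X=x) / P(E=0 | X=x) = P(M=m | E=0, X=x) · P(X=x)` (with `a / 0 = 0`, both sides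
vanish when `P(E=0, X=x) = 0`), this is `θ0` term by term; the values `x` with `P(X=x) = 0`
contribute nothing to either side.
-/

open MeasureTheory ProbabilityTheory

section FiniteValued

variable {Ω α : Type*} [MeasurableSpace Ω] [Fintype α] [MeasurableSpace α]
  [MeasurableSingletonClass α] (μ : Measure Ω) [IsFiniteMeasure μ] {T : Ω → α}

theorem integral_comp_eq_sum_measureReal_preimage (hT : Measurable T) (f : α → ℝ) :
    ∫ ω, f (T ω) ∂μ = ∑ a, μ.real (T ⁻¹' {a}) * f a := by
  rw [← integral_map hT.aemeasurable (measurable_of_finite f).aestronglyMeasurable,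
    integral_fintype .of_finite]
  simp only [measureReal_def, Measure.map_apply hT (measurableSet_singleton _), smul_eq_mul]

theorem setIntegral_comp_eq_sum_measureReal_preimage_inter (hT : Measurable T) (A : Set Ω)
    (f : α → ℝ) : ∫ ω in A, f (T ω) ∂μ = ∑ a, μ.real (T ⁻¹' {a} ∩ A) * f a := by
  simp only [integral_comp_eq_sum_measureReal_preimage _ hT,
    measureReal_restrict_apply (hT (measurableSet_singleton _))]

end FiniteValued

theorem mediation_outcome_propensity_representation_general
    {Ω 𝒳 𝒮 : Type*} [MeasurableSpace Ω] [Fintype 𝒳] [Fintype 𝒮]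
    [MeasurableSpace 𝒳] [MeasurableSingletonClass 𝒳]
    [MeasurableSpace 𝒮] [MeasurableSingletonClass 𝒮]
    (μ : Measure Ω) [IsProbabilityMeasure μ]
    (X : Ω → 𝒳) (M : Ω → 𝒮) (E : Ω → Bool) (Y : Ω → ℝ)
    (hX : Measurable X) (hM : Measurable M) (hE : Measurable E) :
    theta0 μ X M E Y =
      ∫ ω, (if E ω then (0:ℝ) else 1) / cP μ (E ⁻¹' {false}) (X ⁻¹' {X ω}) *
        cE μ Y (E ⁻¹' {true} ∩ M ⁻¹' {M ω} ∩ X ⁻¹' {X ω}) ∂μ := by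
  classical
  set b : 𝒮 × 𝒳 → ℝ := fun p =>
    cE μ Y (E ⁻¹' {true} ∩ M ⁻¹' {p.1} ∩ X ⁻¹' {p.2}) / cP μ (E ⁻¹' {false}) (X ⁻¹' {p.2})
  have h_integrand : (fun ω => (if E ω then (0:ℝ) else 1) / cP μ (E ⁻¹' {false}) (X ⁻¹' {X ω}) *
        cE μ Y (E ⁻¹' {true} ∩ M ⁻¹' {M ω} ∩ X ⁻¹' {X ω}))
      = (E ⁻¹' {false}).indicator fun ω => b (M ω, X ω) := by
    ext ω
    cases h : E ω <;> simp [h, b, div_eq_inv_mul]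
  rw [h_integrand, integral_indicator (hE (measurableSet_singleton false)),
    setIntegral_comp_eq_sum_measureReal_preimage_inter _ (hM.prodMk hX), Fintype.sum_prod_type,
    theta0]
  refine Finset.sum_congr rfl fun m _ => ?_
  rw [Finset.sum_filter_of_ne fun x _ hx => by contrapose! hx; simp [hx]]
  refine Finset.sum_congr rfl fun x _ => ?_
  have h_cell : (fun ω => (M ω, X ω)) ⁻¹' {(m, x)} ∩ E ⁻¹' {false}
      = M ⁻¹' {m} ∩ (E ⁻¹' {false} ∩ X ⁻¹' {x}) := by
    ext ω
    simp only [Set.mem_inter_iff, Set.mem_preimage, Set.mem_singleton_iff, Prod.mk.injEq]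
    tauto
  rw [h_cell, measureReal_def]
  simp only [b, cP, div_div_eq_mul_div]
  ring

/-- the mediation functional admits the outcome–propensity representation
`θ0 = E[ (1{E=0}/P(E=0|X)) · b(M,X) ]` with `b(m,x) = E(Y|E=1,M=m,X=x)`. -/
theorem mediation_outcome_propensity_representation
    {Ω 𝒳 𝒮 : Type*} [MeasurableSpace Ω] [Fintype 𝒳] [Fintype 𝒮]
    [MeasurableSpace 𝒳] [MeasurableSingletonClass 𝒳]
    [MeasurableSpace 𝒮] [MeasurableSingletonClass 𝒮]
    (μ : Measure Ω) [IsProbabilityMeasure μ]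
    (X : Ω → 𝒳) (M : Ω → 𝒮) (E : Ω → Bool) (Y : Ω → ℝ)
    (hX : Measurable X) (hM : Measurable M) (hE : Measurable E)
    (hY : Integrable Y μ)
    (hposE : ∀ (e : Bool) (x : 𝒳), μ (X ⁻¹' {x}) ≠ 0 → μ (E ⁻¹' {e} ∩ X ⁻¹' {x}) ≠ 0)
    (hposM : ∀ (m : 𝒮) (e : Bool) (x : 𝒳), μ (X ⁻¹' {x}) ≠ 0 →
      μ (M ⁻¹' {m} ∩ E ⁻¹' {e} ∩ X ⁻¹' {x}) ≠ 0) :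
    theta0 μ X M E Y =
      ∫ ω, (if E ω then (0:ℝ) else 1) / cP μ (E ⁻¹' {false}) (X ⁻¹' {X ω}) *
        cE μ Y (E ⁻¹' {true} ∩ M ⁻¹' {M ω} ∩ X ⁻¹' {X ω}) ∂μ :=
  mediation_outcome_propensity_representation_general μ X M E Y hX hM hE
end

section
/- The mediation functional admits the inverse-probability-weighting representation (the paper's Strategy 3): θ0 = E[ Y · 1{E=1} · P(M=M|E=0,X) / ( P(E=1|X) · P(M=M|E=1,X) ) ], where the conditional probabilities are evaluated at the random point (M(ω),X(ω)). -/
open MeasureTheory ProbabilityTheory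

/-- the mediation functional admits the inverse-probability-weighting
representation
`θ0 = E[ Y·1{E=1}·P(M=M|E=0,X) / (P(E=1|X)·P(M=M|E=1,X)) ]`. -/
theorem mediation_ipw_representation
    {Ω 𝒳 𝒮 : Type*} [MeasurableSpace Ω] [Fintype 𝒳] [Fintype 𝒮]
    [MeasurableSpace 𝒳] [MeasurableSingletonClass 𝒳]
    [MeasurableSpace 𝒮] [MeasurableSingletonClass 𝒮]
    (μ : Measure Ω) [IsProbabilityMeasure μ]
    (X : Ω → 𝒳) (M : Ω → 𝒮) (E : Ω → Bool) (Y : Ω → ℝ)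
    (hX : Measurable X) (hM : Measurable M) (hE : Measurable E)
    (hY : Integrable Y μ)
    (hposE : ∀ (e : Bool) (x : 𝒳), μ (X ⁻¹' {x}) ≠ 0 → μ (E ⁻¹' {e} ∩ X ⁻¹' {x}) ≠ 0)
    (hposM : ∀ (m : 𝒮) (e : Bool) (x : 𝒳), μ (X ⁻¹' {x}) ≠ 0 →
      μ (M ⁻¹' {m} ∩ E ⁻¹' {e} ∩ X ⁻¹' {x}) ≠ 0) :
    theta0 μ X M E Y =
      ∫ ω, Y ω * (if E ω then (1:ℝ) else 0) *
          cP μ (M ⁻¹' {M ω}) (E ⁻¹' {false} ∩ X ⁻¹' {X ω}) /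
          (cP μ (E ⁻¹' {true}) (X ⁻¹' {X ω}) *
            cP μ (M ⁻¹' {M ω}) (E ⁻¹' {true} ∩ X ⁻¹' {X ω})) ∂μ := by
  classical
  set A : 𝒮 → 𝒳 → Set Ω := fun m x => E ⁻¹' {true} ∩ M ⁻¹' {m} ∩ X ⁻¹' {x} with hAdef
  have hAmeas : ∀ m x, MeasurableSet (A m x) := fun m x =>
    ((hE (measurableSet_singleton _)).inter (hM (measurableSet_singleton _))).inter
      (hX (measurableSet_singleton _))
  set k : 𝒮 → 𝒳 → ℝ := fun m x =>
    cP μ (M ⁻¹' {m}) (E ⁻¹' {false} ∩ X ⁻¹' {x}) /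
      (cP μ (E ⁻¹' {true}) (X ⁻¹' {x}) * cP μ (M ⁻¹' {m}) (E ⁻¹' {true} ∩ X ⁻¹' {x})) with hkdef
  -- pointwise decomposition of the integrand
  have hfun : ∀ ω, Y ω * (if E ω then (1:ℝ) else 0) *
      cP μ (M ⁻¹' {M ω}) (E ⁻¹' {false} ∩ X ⁻¹' {X ω}) /
      (cP μ (E ⁻¹' {true}) (X ⁻¹' {X ω}) *
        cP μ (M ⁻¹' {M ω}) (E ⁻¹' {true} ∩ X ⁻¹' {X ω}))
      = ∑ m : 𝒮, ∑ x : 𝒳, (A m x).indicator (fun ω => Y ω * k m x) ω := by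
    intro ω
    by_cases hEω : E ω = true
    · rw [Finset.sum_eq_single (M ω)]
      · rw [Finset.sum_eq_single (X ω)]
        · rw [Set.indicator_of_mem (by simp [hAdef, hEω])]
          simp only [hEω, if_true, hkdef, mul_one]
          rw [mul_div_assoc]
        · intro x _ hx
          exact Set.indicator_of_notMem (by simp [hAdef, Ne.symm hx]) _
        · simp
      · intro m _ hm
        apply Finset.sum_eq_zero
        intro x _
        exact Set.indicator_of_notMem (by simp [hAdef, Ne.symm hm]) _
      · simp
    · rw [Finset.sum_eq_zero, if_neg hEω, mul_zero, zero_mul, zero_div]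
      intro m _
      apply Finset.sum_eq_zero
      intro x _
      exact Set.indicator_of_notMem (by simp [hAdef, hEω]) _
  have hint : ∀ m x, Integrable ((A m x).indicator (fun ω => Y ω * k m x)) μ :=
    fun m x => (hY.mul_const (k m x)).indicator (hAmeas m x)
  have hRHS : (∫ ω, Y ω * (if E ω then (1:ℝ) else 0) *
      cP μ (M ⁻¹' {M ω}) (E ⁻¹' {false} ∩ X ⁻¹' {X ω}) /
      (cP μ (E ⁻¹' {true}) (X ⁻¹' {X ω}) *
        cP μ (M ⁻¹' {M ω}) (E ⁻¹' {true} ∩ X ⁻¹' {X ω})) ∂μ)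
      = ∑ m : 𝒮, ∑ x : 𝒳, (∫ ω in A m x, Y ω ∂μ) * k m x := by
    rw [integral_congr_ae (Filter.EventuallyEq.of_eq (funext hfun))]
    rw [integral_finset_sum _ (fun m _ => integrable_finset_sum _ (fun x _ => hint m x))]
    refine Finset.sum_congr rfl fun m _ => ?_
    rw [integral_finset_sum _ (fun x _ => hint m x)]
    refine Finset.sum_congr rfl fun x _ => ?_
    rw [integral_indicator (hAmeas m x), integral_mul_const]
  rw [hRHS, theta0]
  refine Finset.sum_congr rfl fun m _ => ?_
  rw [Finset.sum_subset (Finset.filter_subset (fun x => μ (X ⁻¹' {x}) ≠ 0) Finset.univ)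
    (fun x _ hx => ?_)]
  · refine Finset.sum_congr rfl fun x _ => ?_
    by_cases hxz : μ (X ⁻¹' {x}) = 0
    · have hA0 : μ (A m x) = 0 := measure_mono_null (fun ω hω => hω.2) hxz
      rw [Measure.restrict_eq_zero.mpr hA0, integral_zero_measure, zero_mul, hxz]
      simp
    · have hxne := hxz
      have hEXne := hposE true x hxne
      have hAne : μ (A m x) ≠ 0 := by
        have := hposM m true x hxne
        have hset : M ⁻¹' {m} ∩ E ⁻¹' {true} ∩ X ⁻¹' {x} = A m x := by
          ext ω; simp only [hAdef, Set.mem_inter_iff, Set.mem_preimage]; tauto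
        rwa [hset] at this
      have hset2 : M ⁻¹' {m} ∩ (E ⁻¹' {true} ∩ X ⁻¹' {x}) = A m x := by
        ext ω; simp only [hAdef, Set.mem_inter_iff, Set.mem_preimage]; tauto
      have ha : (μ (A m x)).toReal ≠ 0 :=
        ENNReal.toReal_ne_zero.mpr ⟨hAne, measure_ne_top μ _⟩
      have hb : (μ (E ⁻¹' {true} ∩ X ⁻¹' {x})).toReal ≠ 0 :=
        ENNReal.toReal_ne_zero.mpr ⟨hEXne, measure_ne_top μ _⟩
      have hc : (μ (X ⁻¹' {x})).toReal ≠ 0 :=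
        ENNReal.toReal_ne_zero.mpr ⟨hxne, measure_ne_top μ _⟩
      have hd : (μ (E ⁻¹' {false} ∩ X ⁻¹' {x})).toReal ≠ 0 :=
        ENNReal.toReal_ne_zero.mpr ⟨hposE false x hxne, measure_ne_top μ _⟩
      simp only [cE, cP, hkdef, hset2, hAdef]
      field_simp
  · simp only [Finset.mem_filter, Finset.mem_univ, true_and, not_not] at hx
    rw [hx]
    simp
end

section
/- Change-of-measure lemma underlying the equivalence of all representations of the mediation functional: for every function h : 𝒮 × 𝒳 → ℝ, E[ 1{E=1} · P(M=M|E=0,X)·h(M,X) / ( P(E=1|X)·P(M=M|E=1,X) ) ] = E[ (1{E=0}/P(E=0|X)) · h(M,X) ] = Σ_{m∈𝒮, x∈𝒳, P(X=x)>0} h(m,x)·P(M=m|E=0,X=x)·P(X=x). -/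
/-!
Both integrands are functions of the finite-valued triple `(E, M, X)`, so each integral is a
finite sum over the cells `{M = m, E = e, X = x}` weighted by their probabilities, and only the
cells with `E = 1` (resp. `E = 0`) contribute. By the chain rule
`P(M=m, E=e, X=x) = P(M=m | E=e, X=x) · P(E=e | X=x) · P(X=x)` the weight of each contributing
cell cancels the inverse weights of the integrand, leaving `h(m,x) · P(M=m | E=0, X=x) · P(X=x)`.
-/

open MeasureTheory ProbabilityTheory

lemma integral_comp_eq_sum_measure_preimage {Ω T : Type*} [MeasurableSpace Ω] [Fintype T]
    [MeasurableSpace T] [MeasurableSingletonClass T] (μ : Measure Ω) [IsFiniteMeasure μ]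
    {Y : Ω → T} (hY : Measurable Y) (g : T → ℝ) :
    ∫ ω, g (Y ω) ∂μ = ∑ t, (μ (Y ⁻¹' {t})).toReal * g t := by
  rw [← integral_map hY.aemeasurable (measurable_of_countable g).aestronglyMeasurable,
    integral_fintype .of_finite]
  simp [measureReal_def, Measure.map_apply hY (measurableSet_singleton _)]

lemma toReal_measure_inter_inter_eq_cP_mul_cP_mul {Ω : Type*} [MeasurableSpace Ω]
    (μ : Measure Ω) [IsFiniteMeasure μ] (A B C : Set Ω) :
    (μ (A ∩ B ∩ C)).toReal = cP μ A (B ∩ C) * cP μ B C * (μ C).toReal := by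
  simp only [cP, Set.inter_assoc, ← measureReal_def]
  by_cases hBC : μ.real (B ∩ C) = 0
  · rw [measureReal_mono_null Set.inter_subset_right hBC, hBC]
    simp
  have hC : μ.real C ≠ 0 := fun hC => hBC (measureReal_mono_null Set.inter_subset_right hC)
  field_simp

section Cells

variable {Ω 𝒳 𝒮 : Type*} [MeasurableSpace Ω] [Fintype 𝒳] [Fintype 𝒮]
  [MeasurableSpace 𝒳] [MeasurableSingletonClass 𝒳] [MeasurableSpace 𝒮] [MeasurableSingletonClass 𝒮]
  (μ : Measure Ω) [IsFiniteMeasure μ] {X : Ω → 𝒳} {M : Ω → 𝒮} {E : Ω → Bool}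

lemma integral_eq_sum_cells (hX : Measurable X) (hM : Measurable M) (hE : Measurable E)
    (g : Bool → 𝒮 → 𝒳 → ℝ) :
    ∫ ω, g (E ω) (M ω) (X ω) ∂μ =
      ∑ m, ∑ x, ∑ e, (μ (M ⁻¹' {m} ∩ E ⁻¹' {e} ∩ X ⁻¹' {x})).toReal * g e m x := by
  have hcell : ∀ m x e, (fun ω => (M ω, X ω, E ω)) ⁻¹' {(m, x, e)} =
      M ⁻¹' {m} ∩ E ⁻¹' {e} ∩ X ⁻¹' {x} := by
    intro m x e
    ext ω
    simp only [Set.mem_preimage, Set.mem_singleton_iff, Prod.mk.injEq, Set.mem_inter_iff]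
    tauto
  rw [integral_comp_eq_sum_measure_preimage μ (hM.prodMk (hX.prodMk hE))
    (fun t : 𝒮 × 𝒳 × Bool => g t.2.2 t.1 t.2.1)]
  simp only [Fintype.sum_prod_type, hcell]

lemma integral_inverse_propensity_eq_sum (hX : Measurable X) (hM : Measurable M)
    (hE : Measurable E) (h : 𝒮 × 𝒳 → ℝ) :
    ∫ ω, (if E ω then (0:ℝ) else 1) / cP μ (E ⁻¹' {false}) (X ⁻¹' {X ω}) * h (M ω, X ω) ∂μ =
      ∑ m, ∑ x, h (m, x) * cP μ (M ⁻¹' {m}) (E ⁻¹' {false} ∩ X ⁻¹' {x}) *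
        (μ (X ⁻¹' {x})).toReal := by
  refine (integral_eq_sum_cells μ hX hM hE fun e m x =>
    (if e then (0:ℝ) else 1) / cP μ (E ⁻¹' {false}) (X ⁻¹' {x}) * h (m, x)).trans ?_
  refine Finset.sum_congr rfl fun m _ => Finset.sum_congr rfl fun x _ => ?_
  -- a field identity, valid also on null cells thanks to `a / 0 = 0`
  simp only [Fintype.sum_bool, if_true, Bool.false_eq_true, if_false, zero_div, zero_mul,
    mul_zero, zero_add, one_div, cP, Set.inter_assoc, inv_div]
  ring

lemma integral_mediation_weight_eq_sum (hX : Measurable X) (hM : Measurable M)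
    (hE : Measurable E)
    (hpos : ∀ m x, μ (X ⁻¹' {x}) ≠ 0 → μ (M ⁻¹' {m} ∩ E ⁻¹' {true} ∩ X ⁻¹' {x}) ≠ 0)
    (h : 𝒮 × 𝒳 → ℝ) :
    ∫ ω, (if E ω then (1:ℝ) else 0) * cP μ (M ⁻¹' {M ω}) (E ⁻¹' {false} ∩ X ⁻¹' {X ω}) *
        h (M ω, X ω) / (cP μ (E ⁻¹' {true}) (X ⁻¹' {X ω}) *
          cP μ (M ⁻¹' {M ω}) (E ⁻¹' {true} ∩ X ⁻¹' {X ω})) ∂μ =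
      ∑ m, ∑ x, h (m, x) * cP μ (M ⁻¹' {m}) (E ⁻¹' {false} ∩ X ⁻¹' {x}) *
        (μ (X ⁻¹' {x})).toReal := by
  refine (integral_eq_sum_cells μ hX hM hE fun e m x =>
    (if e then (1:ℝ) else 0) * cP μ (M ⁻¹' {m}) (E ⁻¹' {false} ∩ X ⁻¹' {x}) * h (m, x) /
      (cP μ (E ⁻¹' {true}) (X ⁻¹' {x}) * cP μ (M ⁻¹' {m}) (E ⁻¹' {true} ∩ X ⁻¹' {x}))).trans ?_
  refine Finset.sum_congr rfl fun m _ => Finset.sum_congr rfl fun x _ => ?_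
  simp only [Fintype.sum_bool, if_true, Bool.false_eq_true, if_false, one_mul, zero_mul,
    zero_div, mul_zero, add_zero]
  rcases eq_or_ne (μ (M ⁻¹' {m} ∩ E ⁻¹' {true} ∩ X ⁻¹' {x})).toReal 0 with hcell | hcell
  · have hx : μ (X ⁻¹' {x}) = 0 := by
      by_contra hx
      exact hpos m x hx ((measureReal_eq_zero_iff).mp hcell)
    simp [hcell, hx]
  · rw [toReal_measure_inter_inter_eq_cP_mul_cP_mul] at hcell ⊢
    obtain ⟨hM1E1, -⟩ := mul_ne_zero_iff.mp hcell
    obtain ⟨hM1, hE1⟩ := mul_ne_zero_iff.mp hM1E1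
    field_simp

end Cells

open Classical in
theorem mediation_change_of_measure_general
    {Ω 𝒳 𝒮 : Type*} [MeasurableSpace Ω] [Fintype 𝒳] [Fintype 𝒮]
    [MeasurableSpace 𝒳] [MeasurableSingletonClass 𝒳]
    [MeasurableSpace 𝒮] [MeasurableSingletonClass 𝒮]
    (μ : Measure Ω) [IsProbabilityMeasure μ]
    (X : Ω → 𝒳) (M : Ω → 𝒮) (E : Ω → Bool)
    (hX : Measurable X) (hM : Measurable M) (hE : Measurable E)
    (hposM : ∀ (m : 𝒮) (e : Bool) (x : 𝒳), μ (X ⁻¹' {x}) ≠ 0 →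
      μ (M ⁻¹' {m} ∩ E ⁻¹' {e} ∩ X ⁻¹' {x}) ≠ 0) :
    ∀ h : 𝒮 × 𝒳 → ℝ,
      (∫ ω, (if E ω then (1:ℝ) else 0) *
          cP μ (M ⁻¹' {M ω}) (E ⁻¹' {false} ∩ X ⁻¹' {X ω}) * h (M ω, X ω) /
          (cP μ (E ⁻¹' {true}) (X ⁻¹' {X ω}) *
            cP μ (M ⁻¹' {M ω}) (E ⁻¹' {true} ∩ X ⁻¹' {X ω})) ∂μ =
        ∫ ω, (if E ω then (0:ℝ) else 1) / cP μ (E ⁻¹' {false}) (X ⁻¹' {X ω}) *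
          h (M ω, X ω) ∂μ) ∧
      (∫ ω, (if E ω then (0:ℝ) else 1) / cP μ (E ⁻¹' {false}) (X ⁻¹' {X ω}) *
          h (M ω, X ω) ∂μ =
        ∑ m : 𝒮, ∑ x ∈ Finset.univ.filter (fun x => μ (X ⁻¹' {x}) ≠ 0),
          h (m, x) * cP μ (M ⁻¹' {m}) (E ⁻¹' {false} ∩ X ⁻¹' {x}) *
            (μ (X ⁻¹' {x})).toReal) := by
  intro h
  have hnull : ∀ m, ∑ x ∈ Finset.univ.filter (fun x => μ (X ⁻¹' {x}) ≠ 0),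
      h (m, x) * cP μ (M ⁻¹' {m}) (E ⁻¹' {false} ∩ X ⁻¹' {x}) * (μ (X ⁻¹' {x})).toReal =
      ∑ x, h (m, x) * cP μ (M ⁻¹' {m}) (E ⁻¹' {false} ∩ X ⁻¹' {x}) *
        (μ (X ⁻¹' {x})).toReal :=
    fun m => Finset.sum_filter_of_ne fun x _ hterm hx => hterm (by simp [hx])
  simp only [integral_mediation_weight_eq_sum μ hX hM hE (fun m => hposM m true) h,
    integral_inverse_propensity_eq_sum μ hX hM hE h, hnull, and_self]

open Classical in
/-- change-of-measure lemma: for every `h : 𝒮 × 𝒳 → ℝ`,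
`E[1{E=1}·P(M=M|E=0,X)·h(M,X)/(P(E=1|X)·P(M=M|E=1,X))]
= E[(1{E=0}/P(E=0|X))·h(M,X)] = Σ_{m,x:P(X=x)>0} h(m,x)·P(M=m|E=0,X=x)·P(X=x)`. -/
theorem mediation_change_of_measure
    {Ω 𝒳 𝒮 : Type*} [MeasurableSpace Ω] [Fintype 𝒳] [Fintype 𝒮]
    [MeasurableSpace 𝒳] [MeasurableSingletonClass 𝒳]
    [MeasurableSpace 𝒮] [MeasurableSingletonClass 𝒮]
    (μ : Measure Ω) [IsProbabilityMeasure μ]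
    (X : Ω → 𝒳) (M : Ω → 𝒮) (E : Ω → Bool)
    (hX : Measurable X) (hM : Measurable M) (hE : Measurable E)
    (hposE : ∀ (e : Bool) (x : 𝒳), μ (X ⁻¹' {x}) ≠ 0 → μ (E ⁻¹' {e} ∩ X ⁻¹' {x}) ≠ 0)
    (hposM : ∀ (m : 𝒮) (e : Bool) (x : 𝒳), μ (X ⁻¹' {x}) ≠ 0 →
      μ (M ⁻¹' {m} ∩ E ⁻¹' {e} ∩ X ⁻¹' {x}) ≠ 0) :
    ∀ h : 𝒮 × 𝒳 → ℝ,
      (∫ ω, (if E ω then (1:ℝ) else 0) *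
          cP μ (M ⁻¹' {M ω}) (E ⁻¹' {false} ∩ X ⁻¹' {X ω}) * h (M ω, X ω) /
          (cP μ (E ⁻¹' {true}) (X ⁻¹' {X ω}) *
            cP μ (M ⁻¹' {M ω}) (E ⁻¹' {true} ∩ X ⁻¹' {X ω})) ∂μ =
        ∫ ω, (if E ω then (0:ℝ) else 1) / cP μ (E ⁻¹' {false}) (X ⁻¹' {X ω}) *
          h (M ω, X ω) ∂μ) ∧
      (∫ ω, (if E ω then (0:ℝ) else 1) / cP μ (E ⁻¹' {false}) (X ⁻¹' {X ω}) *
          h (M ω, X ω) ∂μ =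
        ∑ m : 𝒮, ∑ x ∈ Finset.univ.filter (fun x => μ (X ⁻¹' {x}) ≠ 0),
          h (m, x) * cP μ (M ⁻¹' {m}) (E ⁻¹' {false} ∩ X ⁻¹' {x}) *
            (μ (X ⁻¹' {x})).toReal) :=
  mediation_change_of_measure_general μ X M E hX hM hE hposM
end

section
/- The efficient influence function of the mediation functional has mean zero at the truth: E[S] = 0, where S := 1{E=1}·[P(M=M|E=0,X)/(P(E=1|X)·P(M=M|E=1,X))]·(Y − b(M,X)) + [1{E=0}/P(E=0|X)]·(b(M,X) − η(X)) + η(X) − θ0. -/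
open MeasureTheory ProbabilityTheory

/-! On each cell of a finite partition the defining identity `cE μ Y A * P(A) = ∫_A Y` makes the
residual `Y - cE μ Y (cell)` integrate to zero against any function of the cell. The first term
of `S` is such a residual for `Y` on the cells of `(E, M, X)` (on `E = 1` its cell mean is
`b(M, X)`), the second for `b(M, X)` on the cells of `(E, X)` (on `E = 0` its cell mean is
`η(X)`), and `E[η(X)] = θ0`. -/

open Finset

section CellDecomposition

variable {Ω α : Type*} [Fintype α] {φ : Ω → α}

lemma comp_mul_eq_sum_indicator (g : α → ℝ) (Y : Ω → ℝ) (ω : Ω) :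
    g (φ ω) * Y ω = ∑ a, (φ ⁻¹' {a}).indicator (fun ω ↦ g a * Y ω) ω := by
  rw [Fintype.sum_eq_single (φ ω), Set.indicator_of_mem (show ω ∈ φ ⁻¹' {φ ω} from rfl)]
  exact fun a ha ↦ Set.indicator_of_notMem (show ω ∉ φ ⁻¹' {a} from Ne.symm ha) _

variable [MeasurableSpace Ω] {μ : Measure Ω} [MeasurableSpace α] [MeasurableSingletonClass α]

lemma integrable_comp_mul (hφ : Measurable φ) (g : α → ℝ) {Y : Ω → ℝ} (hY : Integrable Y μ) :
    Integrable (fun ω ↦ g (φ ω) * Y ω) μ := by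
  simp_rw [comp_mul_eq_sum_indicator]
  exact integrable_finsetSum _ fun a _ ↦ (hY.const_mul _).indicator (hφ (measurableSet_singleton a))

lemma integrable_comp [IsFiniteMeasure μ] (hφ : Measurable φ) (g : α → ℝ) :
    Integrable (fun ω ↦ g (φ ω)) μ := by
  simpa using integrable_comp_mul hφ g (integrable_const (1 : ℝ))

lemma integral_comp_mul_eq_sum (hφ : Measurable φ) (g : α → ℝ) {Y : Ω → ℝ}
    (hY : Integrable Y μ) :
    ∫ ω, g (φ ω) * Y ω ∂μ = ∑ a, g a * ∫ ω in φ ⁻¹' {a}, Y ω ∂μ := by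
  have hcell (a : α) : MeasurableSet (φ ⁻¹' {a}) := hφ (measurableSet_singleton a)
  simp_rw [comp_mul_eq_sum_indicator]
  rw [integral_finsetSum _ fun a _ ↦ (hY.const_mul _).indicator (hcell a)]
  simp_rw [integral_indicator (hcell _), integral_const_mul]

lemma integral_comp_eq_sum [IsFiniteMeasure μ] (hφ : Measurable φ) (g : α → ℝ) :
    ∫ ω, g (φ ω) ∂μ = ∑ a, g a * μ.real (φ ⁻¹' {a}) := by
  simpa using integral_comp_mul_eq_sum hφ g (integrable_const (1 : ℝ))

lemma cE_mul_measureReal [IsFiniteMeasure μ] (Y : Ω → ℝ) (A : Set Ω) :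
    cE μ Y A * μ.real A = ∫ ω in A, Y ω ∂μ := by
  rcases eq_or_ne (μ A) 0 with hA | hA
  · simp [measureReal_def, hA, Measure.restrict_eq_zero.mpr hA]
  · exact div_mul_cancel₀ _ (ENNReal.toReal_ne_zero.mpr ⟨hA, measure_ne_top μ A⟩)

lemma integrable_comp_mul_sub_cE [IsFiniteMeasure μ] (hφ : Measurable φ) (g : α → ℝ)
    {Y : Ω → ℝ} (hY : Integrable Y μ) :
    Integrable (fun ω ↦ g (φ ω) * (Y ω - cE μ Y (φ ⁻¹' {φ ω}))) μ :=
  integrable_comp_mul hφ g (hY.sub (integrable_comp hφ fun a ↦ cE μ Y (φ ⁻¹' {a})))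

lemma integral_comp_mul_sub_cE [IsFiniteMeasure μ] (hφ : Measurable φ) (g : α → ℝ)
    {Y : Ω → ℝ} (hY : Integrable Y μ) :
    ∫ ω, g (φ ω) * (Y ω - cE μ Y (φ ⁻¹' {φ ω})) ∂μ = 0 := by
  set c : α → ℝ := fun a ↦ g a * cE μ Y (φ ⁻¹' {a})
  simp_rw [mul_sub]
  rw [integral_sub (integrable_comp_mul hφ g hY) (integrable_comp hφ c),
    integral_comp_mul_eq_sum hφ g hY, integral_comp_eq_sum hφ c, ← sum_sub_distrib]
  refine sum_eq_zero fun a _ ↦ ?_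
  rw [mul_assoc, cE_mul_measureReal, sub_self]

lemma cE_comp_eq_sum_mul_cP [IsFiniteMeasure μ] (hφ : Measurable φ) (f : α → ℝ) (A : Set Ω) :
    cE μ (fun ω ↦ f (φ ω)) A = ∑ a, f a * cP μ (φ ⁻¹' {a}) A := by
  simp_rw [cE, cP, integral_comp_eq_sum (μ := μ.restrict A) hφ f, sum_div, mul_div_assoc,
    measureReal_restrict_apply (hφ (measurableSet_singleton _)), measureReal_def]

lemma cE_comp_eq_sum_mul_cP_of_subset_preimage {𝒳 : Type*} [IsFiniteMeasure μ] {X : Ω → 𝒳}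
    (hφ : Measurable φ) (f : α → 𝒳 → ℝ) {x : 𝒳} {A : Set Ω} (hA : MeasurableSet A)
    (hAX : A ⊆ X ⁻¹' {x}) :
    cE μ (fun ω ↦ f (φ ω) (X ω)) A = ∑ a, f a x * cP μ (φ ⁻¹' {a}) A := by
  have hint : ∫ ω in A, f (φ ω) (X ω) ∂μ = ∫ ω in A, f (φ ω) x ∂μ :=
    setIntegral_congr_fun hA fun ω hω ↦ by rw [show X ω = x from hAX hω]
  rw [cE, hint, ← cE, cE_comp_eq_sum_mul_cP hφ (f · x)]

end CellDecomposition

lemma theta0_eq_sum {Ω 𝒳 𝒮 : Type*} [MeasurableSpace Ω] [Fintype 𝒳] [Fintype 𝒮]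
    (μ : Measure Ω) (X : Ω → 𝒳) (M : Ω → 𝒮) (E : Ω → Bool) (Y : Ω → ℝ) :
    theta0 μ X M E Y = ∑ x, (∑ m, cE μ Y (E ⁻¹' {true} ∩ M ⁻¹' {m} ∩ X ⁻¹' {x}) *
      cP μ (M ⁻¹' {m}) (E ⁻¹' {false} ∩ X ⁻¹' {x})) * μ.real (X ⁻¹' {x}) := by
  rw [theta0, sum_comm, sum_filter_of_ne fun x _ hx ↦ ?_]
  · simp_rw [sum_mul, measureReal_def]
  · contrapose! hx
    simp [hx]

theorem mediation_eif_mean_zero_general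
    {Ω 𝒳 𝒮 : Type*} [MeasurableSpace Ω] [Fintype 𝒳] [Fintype 𝒮]
    [MeasurableSpace 𝒳] [MeasurableSingletonClass 𝒳]
    [MeasurableSpace 𝒮] [MeasurableSingletonClass 𝒮]
    (μ : Measure Ω) [IsProbabilityMeasure μ]
    (X : Ω → 𝒳) (M : Ω → 𝒮) (E : Ω → Bool) (Y : Ω → ℝ)
    (hX : Measurable X) (hM : Measurable M) (hE : Measurable E)
    (hY : Integrable Y μ)
    -- nuisance functions b(m,x) = E(Y|E=1,M=m,X=x) and η(x) = Σ_m b(m,x)·P(M=m|E=0,X=x)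
    (b : 𝒮 → 𝒳 → ℝ)
    (hb : ∀ m x, b m x = cE μ Y (E ⁻¹' {true} ∩ M ⁻¹' {m} ∩ X ⁻¹' {x}))
    (η : 𝒳 → ℝ)
    (hη : ∀ x, η x = ∑ m : 𝒮, b m x * cP μ (M ⁻¹' {m}) (E ⁻¹' {false} ∩ X ⁻¹' {x})) :
    ∫ ω,
        ((if E ω then (1:ℝ) else 0) *
            (cP μ (M ⁻¹' {M ω}) (E ⁻¹' {false} ∩ X ⁻¹' {X ω}) /
              (cP μ (E ⁻¹' {true}) (X ⁻¹' {X ω}) *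
                cP μ (M ⁻¹' {M ω}) (E ⁻¹' {true} ∩ X ⁻¹' {X ω}))) *
            (Y ω - b (M ω) (X ω)) +
          (if E ω then (0:ℝ) else 1) / cP μ (E ⁻¹' {false}) (X ⁻¹' {X ω}) *
            (b (M ω) (X ω) - η (X ω)) +
          η (X ω) - theta0 μ X M E Y) ∂μ = 0 := by
  let φ : Ω → (Bool × 𝒮) × 𝒳 := fun ω ↦ ((E ω, M ω), X ω)
  let ψ : Ω → Bool × 𝒳 := fun ω ↦ (E ω, X ω)
  let B : Ω → ℝ := fun ω ↦ b (M ω) (X ω)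
  let wTreated : (Bool × 𝒮) × 𝒳 → ℝ := fun ⟨⟨e, m⟩, x⟩ ↦ (if e then 1 else 0) *
    (cP μ (M ⁻¹' {m}) (E ⁻¹' {false} ∩ X ⁻¹' {x}) /
      (cP μ (E ⁻¹' {true}) (X ⁻¹' {x}) * cP μ (M ⁻¹' {m}) (E ⁻¹' {true} ∩ X ⁻¹' {x})))
  let wControl : Bool × 𝒳 → ℝ := fun ⟨e, x⟩ ↦
    (if e then 0 else 1) / cP μ (E ⁻¹' {false}) (X ⁻¹' {x})
  have hφ : Measurable φ := (hE.prodMk hM).prodMk hX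
  have hψ : Measurable ψ := hE.prodMk hX
  have hB : Integrable B μ := integrable_comp (hM.prodMk hX) fun p ↦ b p.1 p.2
  have hb_cell (ω : Ω) (hω : E ω = true) : b (M ω) (X ω) = cE μ Y (φ ⁻¹' {φ ω}) := by
    simp only [φ, ← Set.singleton_prod_singleton, Set.mk_preimage_prod, hb, hω]
  have hη_cell (ω : Ω) (hω : E ω = false) : η (X ω) = cE μ B (ψ ⁻¹' {ψ ω}) := by
    simp only [ψ, ← Set.singleton_prod_singleton, Set.mk_preimage_prod, hω]
    rw [cE_comp_eq_sum_mul_cP_of_subset_preimage hM b ((hE (measurableSet_singleton _)).inter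
      (hX (measurableSet_singleton _))) Set.inter_subset_right, hη]
  have hTreated := integrable_comp_mul_sub_cE hφ wTreated hY
  have hControl := integrable_comp_mul_sub_cE hψ wControl hB
  have hηX := integrable_comp hX η (μ := μ)
  have hη_mean : ∫ ω, η (X ω) ∂μ = theta0 μ X M E Y := by
    simp_rw [integral_comp_eq_sum hX, theta0_eq_sum, hη, hb]
  refine (integral_congr_ae (g := fun ω ↦ wTreated (φ ω) * (Y ω - cE μ Y (φ ⁻¹' {φ ω})) +
      wControl (ψ ω) * (B ω - cE μ B (ψ ⁻¹' {ψ ω})) + η (X ω) - theta0 μ X M E Y)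
      (.of_forall fun ω ↦ ?_)).trans ?_
  · beta_reduce
    cases hEω : E ω
    · rw [← hη_cell ω hEω]
      simp [wTreated, wControl, φ, ψ, B, hEω]
    · rw [← hb_cell ω hEω]
      simp [wTreated, wControl, φ, ψ, B, hEω]
  rw [integral_sub ?_ (integrable_const _), integral_add ?_ hηX, integral_add hTreated hControl,
    integral_comp_mul_sub_cE hφ wTreated hY, integral_comp_mul_sub_cE hψ wControl hB, hη_mean,
    integral_const]
  · simp
  · exact hTreated.add hControl
  · exact (hTreated.add hControl).add hηX

/-- the efficient influence function of the mediation functional has mean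
zero at the truth: `E[S] = 0`. -/
theorem mediation_eif_mean_zero
    {Ω 𝒳 𝒮 : Type*} [MeasurableSpace Ω] [Fintype 𝒳] [Fintype 𝒮]
    [MeasurableSpace 𝒳] [MeasurableSingletonClass 𝒳]
    [MeasurableSpace 𝒮] [MeasurableSingletonClass 𝒮]
    (μ : Measure Ω) [IsProbabilityMeasure μ]
    (X : Ω → 𝒳) (M : Ω → 𝒮) (E : Ω → Bool) (Y : Ω → ℝ)
    (hX : Measurable X) (hM : Measurable M) (hE : Measurable E)
    (hY : Integrable Y μ)
    (hposE : ∀ (e : Bool) (x : 𝒳), μ (X ⁻¹' {x}) ≠ 0 → μ (E ⁻¹' {e} ∩ X ⁻¹' {x}) ≠ 0)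
    (hposM : ∀ (m : 𝒮) (e : Bool) (x : 𝒳), μ (X ⁻¹' {x}) ≠ 0 →
      μ (M ⁻¹' {m} ∩ E ⁻¹' {e} ∩ X ⁻¹' {x}) ≠ 0)
    -- nuisance functions b(m,x) = E(Y|E=1,M=m,X=x) and η(x) = Σ_m b(m,x)·P(M=m|E=0,X=x)
    (b : 𝒮 → 𝒳 → ℝ)
    (hb : ∀ m x, b m x = cE μ Y (E ⁻¹' {true} ∩ M ⁻¹' {m} ∩ X ⁻¹' {x}))
    (η : 𝒳 → ℝ)
    (hη : ∀ x, η x = ∑ m : 𝒮, b m x * cP μ (M ⁻¹' {m}) (E ⁻¹' {false} ∩ X ⁻¹' {x})) :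
    ∫ ω,
        ((if E ω then (1:ℝ) else 0) *
            (cP μ (M ⁻¹' {M ω}) (E ⁻¹' {false} ∩ X ⁻¹' {X ω}) /
              (cP μ (E ⁻¹' {true}) (X ⁻¹' {X ω}) *
                cP μ (M ⁻¹' {M ω}) (E ⁻¹' {true} ∩ X ⁻¹' {X ω}))) *
            (Y ω - b (M ω) (X ω)) +
          (if E ω then (0:ℝ) else 1) / cP μ (E ⁻¹' {false}) (X ⁻¹' {X ω}) *
            (b (M ω) (X ω) - η (X ω)) +
          η (X ω) - theta0 μ X M E Y) ∂μ = 0 :=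
  mediation_eif_mean_zero_general μ X M E Y hX hM hE hY b hb η hη
end

section
/- Pathwise differentiability of the mediation functional with the claimed influence function (the core of Theorem 1 for finite-support data): for every differentiable one-parameter family (p_t) of strictly positive joint probability mass functions on 𝒴×𝒮×{0,1}×𝒳 with p_0 equal to the pmf of O = (Y,M,E,X), the map t ↦ θ(t) is differentiable at t = 0 and dθ(t)/dt|_{t=0} = E[ S · U ], where θ(t) := Σ_{m,x} E_t(Y|E=1,M=m,X=x)·f_t(m|E=0,X=x)·f_t(x) is the mediation functional computed under p_t [conditional means, conditional pmfs and marginals formed as ratios of sums of p_t], U := (d/dt) log p_t(Y,M,E,X)|_{t=0} is the score, and S is the efficient influence function S := 1{E=1}·[P(M=M|E=0,X)/(P(E=1|X)·P(M=M|E=1,X))]·(Y − b(M,X)) + [1{E=0}/P(E=0|X)]·(b(M,X) − η(X)) + η(X) − θ0. -/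
open scoped BigOperators

/-- The sample space of the observed data `O = (Y, M, E, X)`, where `Y` takes values in a
finite set `𝒴` of reals (encoded by a finite type `𝒴` with a value map), `M` in a finite
set `𝒮`, `E` in `{0,1}` (encoded as `Bool`) and `X` in a finite set `𝒳`. -/
abbrev Obs (𝒴 𝒮 𝒳 : Type*) := 𝒴 × 𝒮 × Bool × 𝒳

noncomputable section

variable {𝒴 𝒮 𝒳 : Type*} [Fintype 𝒴] [Fintype 𝒮] [Fintype 𝒳]

/-- Marginal pmf of `X`: `f(x) = Σ_{y,m,e} p(y,m,e,x)`. -/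
def margX (p : Obs 𝒴 𝒮 𝒳 → ℝ) (x : 𝒳) : ℝ :=
  ∑ y : 𝒴, ∑ m : 𝒮, ∑ e : Bool, p (y, m, e, x)

/-- Joint pmf of `(E, X)`. -/
def jointEX (p : Obs 𝒴 𝒮 𝒳 → ℝ) (e : Bool) (x : 𝒳) : ℝ :=
  ∑ y : 𝒴, ∑ m : 𝒮, p (y, m, e, x)

/-- Joint pmf of `(M, E, X)`. -/
def jointMEX (p : Obs 𝒴 𝒮 𝒳 → ℝ) (m : 𝒮) (e : Bool) (x : 𝒳) : ℝ :=
  ∑ y : 𝒴, p (y, m, e, x)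

/-- Conditional pmf `P(E=e | X=x)` computed under `p`, as a ratio of sums. -/
def fE (p : Obs 𝒴 𝒮 𝒳 → ℝ) (e : Bool) (x : 𝒳) : ℝ :=
  jointEX p e x / margX p x

/-- Conditional pmf `P(M=m | E=e, X=x)` computed under `p`, as a ratio of sums. -/
def fM (p : Obs 𝒴 𝒮 𝒳 → ℝ) (m : 𝒮) (e : Bool) (x : 𝒳) : ℝ :=
  jointMEX p m e x / jointEX p e x

/-- Outcome regression `b(m,x) = E(Y | E=1, M=m, X=x)` computed under `p`, where
`val : 𝒴 → ℝ` gives the real values of the outcome. -/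
def bFun (val : 𝒴 → ℝ) (p : Obs 𝒴 𝒮 𝒳 → ℝ) (m : 𝒮) (x : 𝒳) : ℝ :=
  (∑ y : 𝒴, val y * p (y, m, true, x)) / jointMEX p m true x

/-- `η(x) = Σ_m b(m,x)·P(M=m | E=0, X=x)` computed under `p`. -/
def etaFun (val : 𝒴 → ℝ) (p : Obs 𝒴 𝒮 𝒳 → ℝ) (x : 𝒳) : ℝ :=
  ∑ m : 𝒮, bFun val p m x * fM p m false x

/-- The mediation functional
`θ(p) = Σ_{m,x} E_p(Y|E=1,M=m,X=x)·f_p(m|E=0,X=x)·f_p(x)` computed under the pmf `p`. -/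
def thetaP (val : 𝒴 → ℝ) (p : Obs 𝒴 𝒮 𝒳 → ℝ) : ℝ :=
  ∑ x : 𝒳, etaFun val p x * margX p x

/-- The efficient influence function `S` of the mediation functional:
`S := 1{E=1}·[P(M=M|E=0,X)/(P(E=1|X)·P(M=M|E=1,X))]·(Y − b(M,X))
  + [1{E=0}/P(E=0|X)]·(b(M,X) − η(X)) + η(X) − θ0`. -/
def effIF (val : 𝒴 → ℝ) (p : Obs 𝒴 𝒮 𝒳 → ℝ) : Obs 𝒴 𝒮 𝒳 → ℝ :=
  fun o =>
    (if o.2.2.1 then (1:ℝ) else 0) *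
        (fM p o.2.1 false o.2.2.2 / (fE p true o.2.2.2 * fM p o.2.1 true o.2.2.2)) *
        (val o.1 - bFun val p o.2.1 o.2.2.2) +
      (if o.2.2.1 then (0:ℝ) else 1) / fE p false o.2.2.2 *
        (bFun val p o.2.1 o.2.2.2 - etaFun val p o.2.2.2) +
      etaFun val p o.2.2.2 - thetaP val p

end

/-!
On strictly positive pmfs `θ` is a rational function of the cell probabilities, so along the path
it is differentiable by the quotient and product rules, with `ṗ := ∂ₜ pₜ |₀` in place of `p` in
the linear marginals. Written in centred form, `ḃ(m,x)` is the `ṗ`-weighted sum of `Y − b(m,x)`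
over the cells with `E = 1, M = m, X = x`, and `∑ₘ b · ḟ(m|0,x)` that of `b(M,x) − η(x)` over the
cells with `E = 0, X = x`, each divided by the `p`-mass of those cells. Matching the three terms of `θ̇ = ∑ₓ (η̇ f + η ḟ)` against the three
summands of `S`, one finds `θ̇ = ∑ₒ (S + θ₀) ṗ`, and `∑ₒ ṗ = 0` removes `θ₀`. Finally
`p · ∂ₜ log pₜ = ṗ` turns this into `E[S · U]`.
-/

open Finset

section

variable {𝒴 𝒮 𝒳 : Type*} [Fintype 𝒴]

theorem HasDerivAt.div_centered {f g : ℝ → ℝ} {f' g' t : ℝ} (hf : HasDerivAt f f' t)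
    (hg : HasDerivAt g g' t) (h : g t ≠ 0) :
    HasDerivAt (fun s => f s / g s) ((f' - f t / g t * g') / g t) t :=
  (hf.fun_div hg h).congr_deriv (by field_simp)

theorem jointMEX_pos [Nonempty 𝒴] {g : Obs 𝒴 𝒮 𝒳 → ℝ} (hg : ∀ o, 0 < g o) (m : 𝒮) (e : Bool)
    (x : 𝒳) : 0 < jointMEX g m e x :=
  sum_pos (fun _ _ => hg _) univ_nonempty

section Marginals

variable [Fintype 𝒮] (g : Obs 𝒴 𝒮 𝒳 → ℝ)

theorem jointEX_eq_sum_jointMEX (e : Bool) (x : 𝒳) :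
    jointEX g e x = ∑ m, jointMEX g m e x :=
  sum_comm

theorem margX_eq_jointEX_add_jointEX (x : 𝒳) :
    margX g x = jointEX g true x + jointEX g false x := by
  simp only [margX, jointEX, Fintype.sum_bool, sum_add_distrib]

theorem sum_eq_sum_margX [Fintype 𝒳] : ∑ o, g o = ∑ x, margX g x := by
  simp only [margX, Fintype.sum_prod_type]
  simp_rw [sum_comm (γ := 𝒳)]

variable {g}

theorem jointEX_pos [Nonempty 𝒴] [Nonempty 𝒮] (hg : ∀ o, 0 < g o) (e : Bool) (x : 𝒳) :
    0 < jointEX g e x := by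
  rw [jointEX_eq_sum_jointMEX]
  exact sum_pos (fun m _ => jointMEX_pos hg m e x) univ_nonempty

theorem margX_pos [Nonempty 𝒴] [Nonempty 𝒮] (hg : ∀ o, 0 < g o) (x : 𝒳) :
    0 < margX g x := by
  rw [margX_eq_jointEX_add_jointEX]
  exact add_pos (jointEX_pos hg _ _) (jointEX_pos hg _ _)

end Marginals

/- Derivatives of `b`, `f(m|e,x)`, `η` and `θ` at `p` in the direction `q`, in centred form. -/
noncomputable section DirectionalDerivatives

variable (val : 𝒴 → ℝ) (p q : Obs 𝒴 𝒮 𝒳 → ℝ)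

def bFunDeriv (m : 𝒮) (x : 𝒳) : ℝ :=
  (∑ y, (val y - bFun val p m x) * q (y, m, true, x)) / jointMEX p m true x

variable [Fintype 𝒮]

def fMDeriv (m : 𝒮) (e : Bool) (x : 𝒳) : ℝ :=
  (jointMEX q m e x - fM p m e x * jointEX q e x) / jointEX p e x

def etaFunDeriv (x : 𝒳) : ℝ :=
  ∑ m, (bFunDeriv val p q m x * fM p m false x + bFun val p m x * fMDeriv p q m false x)

def thetaPDeriv [Fintype 𝒳] : ℝ :=
  ∑ x, (etaFunDeriv val p q x * margX p x + etaFun val p x * margX q x)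

end DirectionalDerivatives

section PathDerivatives

variable (val : 𝒴 → ℝ) {pt : ℝ → Obs 𝒴 𝒮 𝒳 → ℝ} {q : Obs 𝒴 𝒮 𝒳 → ℝ} {t₀ : ℝ}

theorem hasDerivAt_jointMEX (hq : ∀ o, HasDerivAt (fun t => pt t o) (q o) t₀) (m : 𝒮) (e : Bool)
    (x : 𝒳) : HasDerivAt (fun t => jointMEX (pt t) m e x) (jointMEX q m e x) t₀ :=
  HasDerivAt.fun_sum fun y _ => hq (y, m, e, x)

theorem hasDerivAt_bFun (hq : ∀ o, HasDerivAt (fun t => pt t o) (q o) t₀) {m : 𝒮} {x : 𝒳}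
    (h : jointMEX (pt t₀) m true x ≠ 0) :
    HasDerivAt (fun t => bFun val (pt t) m x) (bFunDeriv val (pt t₀) q m x) t₀ := by
  have hnum : HasDerivAt (fun t => ∑ y, val y * pt t (y, m, true, x))
      (∑ y, val y * q (y, m, true, x)) t₀ :=
    HasDerivAt.fun_sum fun y _ => (hq _).const_mul (val y)
  refine (hnum.div_centered (hasDerivAt_jointMEX hq m true x) h).congr_deriv ?_
  simp only [bFunDeriv, sub_mul, sum_sub_distrib, ← mul_sum]
  rfl

variable [Fintype 𝒮]

theorem hasDerivAt_jointEX (hq : ∀ o, HasDerivAt (fun t => pt t o) (q o) t₀) (e : Bool) (x : 𝒳) :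
    HasDerivAt (fun t => jointEX (pt t) e x) (jointEX q e x) t₀ :=
  HasDerivAt.fun_sum fun y _ => HasDerivAt.fun_sum fun m _ => hq (y, m, e, x)

theorem hasDerivAt_margX (hq : ∀ o, HasDerivAt (fun t => pt t o) (q o) t₀) (x : 𝒳) :
    HasDerivAt (fun t => margX (pt t) x) (margX q x) t₀ :=
  HasDerivAt.fun_sum fun y _ => HasDerivAt.fun_sum fun m _ => HasDerivAt.fun_sum fun e _ =>
    hq (y, m, e, x)

theorem hasDerivAt_fM (hq : ∀ o, HasDerivAt (fun t => pt t o) (q o) t₀) {m : 𝒮} {e : Bool}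
    {x : 𝒳} (h : jointEX (pt t₀) e x ≠ 0) :
    HasDerivAt (fun t => fM (pt t) m e x) (fMDeriv (pt t₀) q m e x) t₀ :=
  (hasDerivAt_jointMEX hq m e x).div_centered (hasDerivAt_jointEX hq e x) h

variable [Nonempty 𝒴] [Nonempty 𝒮]

theorem hasDerivAt_etaFun (hq : ∀ o, HasDerivAt (fun t => pt t o) (q o) t₀)
    (hp : ∀ o, 0 < pt t₀ o) (x : 𝒳) :
    HasDerivAt (fun t => etaFun val (pt t) x) (etaFunDeriv val (pt t₀) q x) t₀ :=
  HasDerivAt.fun_sum fun m _ => (hasDerivAt_bFun val hq (jointMEX_pos hp m true x).ne').mul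
    (hasDerivAt_fM hq (jointEX_pos hp false x).ne')

theorem hasDerivAt_thetaP [Fintype 𝒳] (hq : ∀ o, HasDerivAt (fun t => pt t o) (q o) t₀)
    (hp : ∀ o, 0 < pt t₀ o) :
    HasDerivAt (fun t => thetaP val (pt t)) (thetaPDeriv val (pt t₀) q) t₀ :=
  HasDerivAt.fun_sum fun x _ => (hasDerivAt_etaFun val hq hp x).mul (hasDerivAt_margX hq x)

end PathDerivatives

section InfluenceFunction

variable [Fintype 𝒮] (val : 𝒴 → ℝ) (p q : Obs 𝒴 𝒮 𝒳 → ℝ) (x : 𝒳)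

theorem sum_bFun_mul_fMDeriv :
    ∑ m, bFun val p m x * fMDeriv p q m false x * margX p x =
      ∑ m, (bFun val p m x - etaFun val p x) / fE p false x * jointMEX q m false x := by
  set c := margX p x / jointEX p false x
  have hl : ∀ m, bFun val p m x * fMDeriv p q m false x * margX p x =
      c * (bFun val p m x * jointMEX q m false x) -
        c * jointEX q false x * (bFun val p m x * fM p m false x) := fun m => by
    simp only [c, fMDeriv]; ring
  have hr : ∀ m, (bFun val p m x - etaFun val p x) / fE p false x * jointMEX q m false x =
      c * (bFun val p m x * jointMEX q m false x) - c * etaFun val p x * jointMEX q m false x :=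
    fun m => by simp only [c, fE, div_div_eq_mul_div]; ring
  simp only [hl, hr, sum_sub_distrib, ← mul_sum]
  rw [← etaFun, ← jointEX_eq_sum_jointMEX]
  ring

variable [Fintype 𝒳] (y : 𝒴) (m : 𝒮)

theorem effIF_true : effIF val p (y, m, true, x) =
    fM p m false x / (fE p true x * fM p m true x) * (val y - bFun val p m x) +
      etaFun val p x - thetaP val p := by
  simp [effIF]

theorem effIF_false : effIF val p (y, m, false, x) =
    (bFun val p m x - etaFun val p x) / fE p false x + etaFun val p x - thetaP val p := by
  simp [effIF, div_eq_inv_mul]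

theorem jointMEX_effIF_mul_false :
    jointMEX (fun o => (effIF val p o + thetaP val p) * q o) m false x =
      ((bFun val p m x - etaFun val p x) / fE p false x + etaFun val p x) *
        jointMEX q m false x := by
  simp only [jointMEX, effIF_false, sub_add_cancel, mul_sum]

variable {p}

theorem jointMEX_effIF_mul_true [Nonempty 𝒴] [Nonempty 𝒮] (hp : ∀ o, 0 < p o) :
    jointMEX (fun o => (effIF val p o + thetaP val p) * q o) m true x =
      bFunDeriv val p q m x * fM p m false x * margX p x + etaFun val p x * jointMEX q m true x := by
  have hweight : fM p m false x / (fE p true x * fM p m true x) =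
      fM p m false x * margX p x / jointMEX p m true x := by
    have hMEX := (jointMEX_pos hp m true x).ne'
    have hEX := (jointEX_pos hp true x).ne'
    have hX := (margX_pos hp x).ne'
    simp only [fE, fM]
    field_simp
  simp only [jointMEX, effIF_true, sub_add_cancel, hweight, bFunDeriv, add_mul, sum_add_distrib,
    mul_assoc, ← mul_sum]
  ring

theorem margX_effIF_mul [Nonempty 𝒴] [Nonempty 𝒮] (hp : ∀ o, 0 < p o) :
    margX (fun o => (effIF val p o + thetaP val p) * q o) x =
      etaFunDeriv val p q x * margX p x + etaFun val p x * margX q x := by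
  have hmargX : ∀ g : Obs 𝒴 𝒮 𝒳 → ℝ,
      margX g x = ∑ m, jointMEX g m true x + ∑ m, jointMEX g m false x := fun g => by
    rw [margX_eq_jointEX_add_jointEX, jointEX_eq_sum_jointMEX, jointEX_eq_sum_jointMEX]
  rw [hmargX, hmargX q]
  simp only [jointMEX_effIF_mul_true val q x _ hp, jointMEX_effIF_mul_false]
  simp only [add_mul, sum_add_distrib]
  rw [← sum_bFun_mul_fMDeriv, etaFunDeriv]
  simp only [add_mul, sum_mul, sum_add_distrib, mul_add, mul_sum]
  ring

theorem sum_effIF_mul_eq_thetaPDeriv [Nonempty 𝒴] [Nonempty 𝒮] (hp : ∀ o, 0 < p o)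
    (hq : ∑ o, q o = 0) : ∑ o, effIF val p o * q o = thetaPDeriv val p q :=
  calc ∑ o, effIF val p o * q o = ∑ o, (effIF val p o + thetaP val p) * q o := by
        simp only [add_mul, sum_add_distrib, ← mul_sum, hq, mul_zero, add_zero]
    _ = ∑ x, margX (fun o => (effIF val p o + thetaP val p) * q o) x := sum_eq_sum_margX _
    _ = thetaPDeriv val p q := sum_congr rfl fun x _ => margX_effIF_mul val q x hp

end InfluenceFunction

end

theorem mediation_pathwise_differentiability_general
    {𝒴 𝒮 𝒳 : Type*} [Fintype 𝒴] [Fintype 𝒮] [Fintype 𝒳] (val : 𝒴 → ℝ)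
    (p : Obs 𝒴 𝒮 𝒳 → ℝ)
    (hpos : ∀ o, 0 < p o) (hsum : ∑ o : Obs 𝒴 𝒮 𝒳, p o = 1)
    (ε : ℝ) (hε : 0 < ε) (pt : ℝ → Obs 𝒴 𝒮 𝒳 → ℝ)
    (hpt0 : pt 0 = p)
    (hptsum : ∀ t, |t| < ε → ∑ o : Obs 𝒴 𝒮 𝒳, pt t o = 1)
    (hdiff : ∀ o, DifferentiableAt ℝ (fun t => pt t o) 0) :
    HasDerivAt (fun t => thetaP val (pt t))
      (∑ o : Obs 𝒴 𝒮 𝒳, p o * (effIF val p o * deriv (fun t => Real.log (pt t o)) 0)) 0 := by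
  obtain ⟨⟨y, m, -⟩, -⟩ := exists_ne_zero_of_sum_ne_zero (hsum ▸ one_ne_zero)
  have : Nonempty 𝒴 := ⟨y⟩
  have : Nonempty 𝒮 := ⟨m⟩
  subst hpt0
  obtain ⟨q, hq⟩ : ∃ q : Obs 𝒴 𝒮 𝒳 → ℝ, ∀ o, HasDerivAt (fun t => pt t o) (q o) 0 :=
    ⟨_, fun o => (hdiff o).hasDerivAt⟩
  have hscore : ∑ o, q o = 0 := by
    have hconst : (fun t => ∑ o, pt t o) =ᶠ[nhds 0] fun _ => 1 := by
      filter_upwards [Metric.ball_mem_nhds (0 : ℝ) hε] with t ht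
      exact hptsum t (by simpa using ht)
    exact (HasDerivAt.fun_sum fun o _ => hq o).unique
      ((hasDerivAt_const 0 1).congr_of_eventuallyEq hconst)
  have hlog : ∀ o, pt 0 o * (effIF val (pt 0) o * deriv (fun t => Real.log (pt t o)) 0) =
      effIF val (pt 0) o * q o := fun o => by
    rw [((hq o).log (hpos o).ne').deriv]
    field_simp [(hpos o).ne']
  rw [sum_congr rfl fun o _ => hlog o, sum_effIF_mul_eq_thetaPDeriv val q hpos hscore]
  exact hasDerivAt_thetaP val hq hpos

/-- pathwise differentiability of the mediation functional with the claimed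
efficient influence function: for every differentiable one-parameter family `(p_t)` of
strictly positive pmfs with `p_0 = p`, `t ↦ θ(p_t)` is differentiable at `0` with
derivative `E[S·U]`, `U` the score. -/
theorem mediation_pathwise_differentiability
    {𝒴 𝒮 𝒳 : Type*} [Fintype 𝒴] [Fintype 𝒮] [Fintype 𝒳] (val : 𝒴 → ℝ)
    (p : Obs 𝒴 𝒮 𝒳 → ℝ)
    (hpos : ∀ o, 0 < p o) (hsum : ∑ o : Obs 𝒴 𝒮 𝒳, p o = 1)
    (ε : ℝ) (hε : 0 < ε) (pt : ℝ → Obs 𝒴 𝒮 𝒳 → ℝ)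
    (hpt0 : pt 0 = p)
    (hptpos : ∀ t, |t| < ε → ∀ o, 0 < pt t o)
    (hptsum : ∀ t, |t| < ε → ∑ o : Obs 𝒴 𝒮 𝒳, pt t o = 1)
    (hdiff : ∀ o, DifferentiableAt ℝ (fun t => pt t o) 0) :
    HasDerivAt (fun t => thetaP val (pt t))
      (∑ o : Obs 𝒴 𝒮 𝒳, p o * (effIF val p o * deriv (fun t => Real.log (pt t o)) 0)) 0 :=
  mediation_pathwise_differentiability_general val p hpos hsum ε hε pt hpt0 hptsum hdiff
end

section
/- Uniqueness of the influence function in the nonparametric model: if g : 𝒴×𝒮×{0,1}×𝒳 → ℝ satisfies E[g(O)] = 0 and, for every differentiable one-parameter family (p_t) of strictly positive joint pmfs with p_0 the true pmf of O, dθ(t)/dt|_{t=0} = E[g(O)·U] with U the score of the family, then g(O) = S P-almost surely, where S is the efficient influence function S := 1{E=1}·[P(M=M|E=0,X)/(P(E=1|X)·P(M=M|E=1,X))]·(Y − b(M,X)) + [1{E=0}/P(E=0|X)]·(b(M,X) − η(X)) + η(X) − θ0. -/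
open scoped BigOperators

/-!
Along the line `p + t • q` every ingredient of `θ` (the numerator and denominator of `b`, of
`P(M | E = 0, X)` and the marginal of `X`) is affine in `t`, so `dθ/dt` at `0` is explicit by the
quotient rule. Regrouping it by observations shows that it equals `∑ₒ q(o)·(S(o) + θ)`. Along
`p + t • p` the two ratios are constant and the derivative is `θ`, whence `E[S] = 0`.

Now let `d = g - S`, which has mean zero. For small `t` the pmfs `p·(1 + t d)` are admissible and
have score `d`, so the pathwise-derivative property of `g` and the formula above give
`E[g d] = E[S d]`, i.e. `E[(g - S)²] = 0`; as `p > 0`, `g = S` everywhere.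
-/

open Finset Filter Topology

theorem hasDerivAt_div_line {a b c d : ℝ} (hc : c ≠ 0) :
    HasDerivAt (fun t => (a + t * b) / (c + t * d)) ((b - a / c * d) / c) 0 := by
  refine (((hasDerivAt_mul_const (x := 0) b).const_add a).fun_div
    ((hasDerivAt_mul_const d).const_add c) (by simpa using hc)).congr_deriv ?_
  simp only [zero_mul, add_zero]
  field_simp

theorem hasDerivAt_log_line {a b : ℝ} (ha : a ≠ 0) :
    HasDerivAt (fun t => Real.log (a + t * b)) (b / a) 0 := by
  simpa using ((hasDerivAt_mul_const (x := 0) b).const_add a).log (by simpa using ha)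

theorem exists_forall_abs_lt_pos_line {ι : Type*} [Finite ι] {p : ι → ℝ} (hp : ∀ i, 0 < p i)
    (q : ι → ℝ) : ∃ ε > 0, ∀ t, |t| < ε → ∀ i, 0 < p i + t * q i := by
  have hev : ∀ᶠ t in 𝓝 (0 : ℝ), ∀ i, 0 < p i + t * q i :=
    eventually_all.2 fun i =>
      (Continuous.tendsto (by fun_prop) 0).eventually_const_lt (by simpa using hp i)
  simpa [Metric.eventually_nhds_iff, Real.dist_eq] using hev

theorem eq_of_sum_mul_sq_sub_eq_zero {ι : Type*} [Fintype ι] {p f g : ι → ℝ} (hp : ∀ i, 0 < p i)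
    (h : ∑ i, p i * (f i - g i) ^ 2 = 0) (i : ι) : f i = g i := by
  have hi := (sum_eq_zero_iff_of_nonneg fun j _ => mul_nonneg (hp j).le (sq_nonneg (f j - g j))).1
    h i (mem_univ i)
  simpa [(hp i).ne', sub_eq_zero] using hi

noncomputable section

namespace Mediation

variable {𝒴 𝒮 𝒳 : Type*}

def outcomeMoment [Fintype 𝒴] (val : 𝒴 → ℝ) (p : Obs 𝒴 𝒮 𝒳 → ℝ) (m : 𝒮) (x : 𝒳) : ℝ :=
  ∑ y, val y * p (y, m, true, x)

theorem bFun_eq_div [Fintype 𝒴] (val : 𝒴 → ℝ) (p : Obs 𝒴 𝒮 𝒳 → ℝ) (m : 𝒮) (x : 𝒳) :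
    bFun val p m x = outcomeMoment val p m x / jointMEX p m true x := rfl

section Marginals

variable (p q : Obs 𝒴 𝒮 𝒳 → ℝ) (t : ℝ)

theorem outcomeMoment_line [Fintype 𝒴] (val : 𝒴 → ℝ) (m : 𝒮) (x : 𝒳) :
    outcomeMoment val (fun o => p o + t * q o) m x
      = outcomeMoment val p m x + t * outcomeMoment val q m x := by
  simp only [outcomeMoment, mul_sum, ← sum_add_distrib]
  exact sum_congr rfl fun _ _ => by ring

theorem jointMEX_line [Fintype 𝒴] (m : 𝒮) (e : Bool) (x : 𝒳) :
    jointMEX (fun o => p o + t * q o) m e x = jointMEX p m e x + t * jointMEX q m e x := by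
  simp only [jointMEX, mul_sum, sum_add_distrib]

theorem jointEX_line [Fintype 𝒴] [Fintype 𝒮] (e : Bool) (x : 𝒳) :
    jointEX (fun o => p o + t * q o) e x = jointEX p e x + t * jointEX q e x := by
  simp only [jointEX, mul_sum, sum_add_distrib]

theorem margX_line [Fintype 𝒴] [Fintype 𝒮] (x : 𝒳) :
    margX (fun o => p o + t * q o) x = margX p x + t * margX q x := by
  simp only [margX, mul_sum, sum_add_distrib]

theorem sum_jointMEX [Fintype 𝒴] [Fintype 𝒮] (e : Bool) (x : 𝒳) :
    ∑ m, jointMEX p m e x = jointEX p e x :=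
  sum_comm

theorem jointEX_add_jointEX [Fintype 𝒴] [Fintype 𝒮] (x : 𝒳) :
    jointEX p true x + jointEX p false x = margX p x := by
  simp only [jointEX, margX, Fintype.sum_bool, sum_add_distrib]

theorem jointMEX_pos [Fintype 𝒴] [Nonempty 𝒴] (hp : ∀ o, 0 < p o) (m : 𝒮) (e : Bool) (x : 𝒳) :
    0 < jointMEX p m e x :=
  sum_pos (fun _ _ => hp _) univ_nonempty

theorem jointEX_pos [Fintype 𝒴] [Fintype 𝒮] [Nonempty 𝒴] [Nonempty 𝒮] (hp : ∀ o, 0 < p o)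
    (e : Bool) (x : 𝒳) : 0 < jointEX p e x := by
  rw [← sum_jointMEX]
  exact sum_pos (fun m _ => jointMEX_pos p hp m e x) univ_nonempty

end Marginals

variable [Fintype 𝒴] [Fintype 𝒮] [Fintype 𝒳] (val : 𝒴 → ℝ) (p q : Obs 𝒴 𝒮 𝒳 → ℝ)

def thetaDeriv : ℝ :=
  ∑ x, ((∑ m, ((outcomeMoment val q m x - bFun val p m x * jointMEX q m true x)
          / jointMEX p m true x * fM p m false x
        + bFun val p m x
          * ((jointMEX q m false x - fM p m false x * jointEX q false x) / jointEX p false x)))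
      * margX p x
    + etaFun val p x * margX q x)

theorem hasDerivAt_thetaP_line (hN : ∀ m x, jointMEX p m true x ≠ 0)
    (hD₀ : ∀ x, jointEX p false x ≠ 0) :
    HasDerivAt (fun t => thetaP val (fun o => p o + t * q o)) (thetaDeriv val p q) 0 := by
  simp only [thetaP, etaFun, bFun_eq_div, fM, outcomeMoment_line, jointMEX_line, jointEX_line,
    margX_line]
  refine HasDerivAt.fun_sum fun x _ => ?_
  have hη := HasDerivAt.fun_sum fun m (_ : m ∈ univ) =>
    (hasDerivAt_div_line (a := outcomeMoment val p m x) (b := outcomeMoment val q m x)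
      (d := jointMEX q m true x) (hN m x)).fun_mul
      (hasDerivAt_div_line (a := jointMEX p m false x) (b := jointMEX q m false x)
        (d := jointEX q false x) (hD₀ x))
  refine (hη.fun_mul ((hasDerivAt_mul_const (margX q x)).const_add (margX p x))).congr_deriv ?_
  simp only [zero_mul, add_zero]
  rfl

theorem sum_obs_eq_sum_sum_sum (F : Obs 𝒴 𝒮 𝒳 → ℝ) :
    ∑ o, F o = ∑ x, ∑ m, ∑ y, (F (y, m, true, x) + F (y, m, false, x)) := by
  let e : Obs 𝒴 𝒮 𝒳 ≃ 𝒳 × 𝒮 × 𝒴 × Bool :=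
    ⟨fun o => (o.2.2.2, o.2.1, o.1, o.2.2.1), fun z => (z.2.2.1, z.2.1, z.2.2.2, z.1),
      fun _ => rfl, fun _ => rfl⟩
  rw [← e.symm.sum_comp]
  simp only [Fintype.sum_prod_type, Fintype.sum_bool]
  rfl

theorem sum_mul_effIF_add_thetaP_true {x : 𝒳} (hD₁ : jointEX p true x ≠ 0) (m : 𝒮) :
    ∑ y, q (y, m, true, x) * (effIF val p (y, m, true, x) + thetaP val p)
      = fM p m false x * margX p x / jointMEX p m true x
          * (outcomeMoment val q m x - bFun val p m x * jointMEX q m true x)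
        + etaFun val p x * jointMEX q m true x := by
  have hweight : fM p m false x / (fE p true x * fM p m true x)
      = fM p m false x * margX p x / jointMEX p m true x := by
    simp only [fE, fM]
    rw [div_mul_div_comm, mul_comm (jointEX p true x), mul_div_mul_right _ _ hD₁,
      div_div_eq_mul_div]
  rw [← hweight]
  calc ∑ y, q (y, m, true, x) * (effIF val p (y, m, true, x) + thetaP val p)
      = ∑ y, (fM p m false x / (fE p true x * fM p m true x)
          * (val y * q (y, m, true, x) - bFun val p m x * q (y, m, true, x))
          + etaFun val p x * q (y, m, true, x)) :=
        sum_congr rfl fun y _ => by simp only [effIF, if_true]; ring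
    _ = _ := by simp only [sum_add_distrib, ← mul_sum, sum_sub_distrib]; rfl

theorem sum_mul_effIF_add_thetaP_false (x : 𝒳) (m : 𝒮) :
    ∑ y, q (y, m, false, x) * (effIF val p (y, m, false, x) + thetaP val p)
      = jointMEX q m false x
          * ((bFun val p m x - etaFun val p x) * margX p x / jointEX p false x
            + etaFun val p x) := by
  rw [jointMEX, sum_mul]
  refine sum_congr rfl fun y _ => ?_
  simp only [effIF, fE, Bool.false_eq_true, if_false, one_div, inv_div]
  ring

theorem thetaDeriv_eq_sum_effIF (hD₁ : ∀ x, jointEX p true x ≠ 0) :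
    thetaDeriv val p q = ∑ o, q o * (effIF val p o + thetaP val p) := by
  rw [sum_obs_eq_sum_sum_sum, thetaDeriv]
  refine sum_congr rfl fun x _ => ?_
  simp only [sum_add_distrib (s := univ (α := 𝒴)), sum_mul_effIF_add_thetaP_true val p q (hD₁ x),
    sum_mul_effIF_add_thetaP_false]
  -- The two sides differ summand by summand only by terms that cancel after summing over `m`,
  -- because `∑ m, b·fM = η`, `∑ m, jointMEX q m e x = jointEX q e x`
  -- and `∑ e, jointEX q e x = margX q x`.
  have hterm : ∀ m, fM p m false x * margX p x / jointMEX p m true x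
          * (outcomeMoment val q m x - bFun val p m x * jointMEX q m true x)
        + etaFun val p x * jointMEX q m true x
        + jointMEX q m false x * ((bFun val p m x - etaFun val p x) * margX p x / jointEX p false x
          + etaFun val p x)
      = ((outcomeMoment val q m x - bFun val p m x * jointMEX q m true x)
          / jointMEX p m true x * fM p m false x
        + bFun val p m x
          * ((jointMEX q m false x - fM p m false x * jointEX q false x) / jointEX p false x))
          * margX p x
        + etaFun val p x * (jointMEX q m true x + jointMEX q m false x)
        + (bFun val p m x * fM p m false x * jointEX q false x
            - etaFun val p x * jointMEX q m false x) * (margX p x / jointEX p false x) :=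
    fun m => by ring
  have hη : ∑ m, bFun val p m x * fM p m false x = etaFun val p x := rfl
  simp only [hterm, sum_add_distrib, sum_sub_distrib, ← sum_mul, ← mul_sum, sum_jointMEX, hη,
    jointEX_add_jointEX]
  ring

theorem thetaDeriv_self (hN : ∀ m x, jointMEX p m true x ≠ 0) (hD₀ : ∀ x, jointEX p false x ≠ 0) :
    thetaDeriv val p p = thetaP val p := by
  simp only [thetaDeriv, thetaP, bFun_eq_div, fM, div_mul_cancel₀ _ (hN _ _),
    div_mul_cancel₀ _ (hD₀ _), sub_self, zero_div, zero_mul, mul_zero, add_zero, sum_const_zero,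
    zero_add]

theorem sum_mul_effIF_eq_zero (hN : ∀ m x, jointMEX p m true x ≠ 0)
    (hD₁ : ∀ x, jointEX p true x ≠ 0) (hD₀ : ∀ x, jointEX p false x ≠ 0) (hsum : ∑ o, p o = 1) :
    ∑ o, p o * effIF val p o = 0 := by
  have h := thetaDeriv_eq_sum_effIF val p p hD₁
  simp only [thetaDeriv_self val p hN hD₀, mul_add, sum_add_distrib, ← sum_mul,
    hsum, one_mul] at h
  linarith

theorem thetaDeriv_eq_sum_mul_effIF (hD₁ : ∀ x, jointEX p true x ≠ 0) (hq : ∑ o, q o = 0) :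
    thetaDeriv val p q = ∑ o, q o * effIF val p o := by
  simp only [thetaDeriv_eq_sum_effIF val p q hD₁, mul_add, sum_add_distrib, ← sum_mul, hq,
    zero_mul, add_zero]

end Mediation

end

open Mediation

/-- uniqueness of the influence function in the nonparametric model: any
mean-zero `g` satisfying the pathwise-derivative property `dθ(t)/dt|₀ = E[g·U]` for every
differentiable one-parameter family agrees with the efficient influence function `S`
everywhere (i.e. `P`-a.s., since `p` is strictly positive). -/
theorem mediation_influence_function_unique
    {𝒴 𝒮 𝒳 : Type*} [Fintype 𝒴] [Fintype 𝒮] [Fintype 𝒳] (val : 𝒴 → ℝ)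
    (p : Obs 𝒴 𝒮 𝒳 → ℝ)
    (hpos : ∀ o, 0 < p o) (hsum : ∑ o : Obs 𝒴 𝒮 𝒳, p o = 1)
    (g : Obs 𝒴 𝒮 𝒳 → ℝ)
    (hg0 : ∑ o : Obs 𝒴 𝒮 𝒳, p o * g o = 0)
    (hg : ∀ (ε : ℝ), 0 < ε → ∀ pt : ℝ → Obs 𝒴 𝒮 𝒳 → ℝ,
      pt 0 = p →
      (∀ t, |t| < ε → ∀ o, 0 < pt t o) →
      (∀ t, |t| < ε → ∑ o : Obs 𝒴 𝒮 𝒳, pt t o = 1) →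
      (∀ o, DifferentiableAt ℝ (fun t => pt t o) 0) →
      HasDerivAt (fun t => thetaP val (pt t))
        (∑ o : Obs 𝒴 𝒮 𝒳, p o * (g o * deriv (fun t => Real.log (pt t o)) 0)) 0) :
    ∀ o, g o = effIF val p o := by
  obtain ⟨⟨y₀, m₀, -, -⟩⟩ : Nonempty (Obs 𝒴 𝒮 𝒳) :=
    univ_nonempty_iff.1 (nonempty_of_sum_ne_zero (f := p) (by rw [hsum]; exact one_ne_zero))
  have := Nonempty.intro y₀
  have := Nonempty.intro m₀
  have hN := fun m x => (jointMEX_pos p hpos m true x).ne'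
  have hD₁ := fun x => (jointEX_pos p hpos true x).ne'
  have hD₀ := fun x => (jointEX_pos p hpos false x).ne'
  set d := fun o => g o - effIF val p o
  have hd : ∑ o, p o * d o = 0 := by
    simp only [d, mul_sub, sum_sub_distrib, hg0, sum_mul_effIF_eq_zero val p hN hD₁ hD₀ hsum,
      sub_zero]
  obtain ⟨ε, hε, hpath⟩ := exists_forall_abs_lt_pos_line hpos fun o => p o * d o
  have hderiv := hg ε hε (fun t o => p o + t * (p o * d o)) (by simp) hpath
    (fun t _ => by simp [sum_add_distrib, ← mul_sum, hsum, hd]) (fun o => by fun_prop)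
  have hscore (o) : deriv (fun t => Real.log (p o + t * (p o * d o))) 0 = d o := by
    rw [(hasDerivAt_log_line (hpos o).ne').deriv, mul_div_cancel_left₀ _ (hpos o).ne']
  have key := hderiv.unique (hasDerivAt_thetaP_line val p _ hN hD₀)
  rw [thetaDeriv_eq_sum_mul_effIF val p _ hD₁ hd] at key
  simp only [hscore] at key
  refine eq_of_sum_mul_sq_sub_eq_zero hpos ?_
  rw [← sub_eq_zero.2 key, ← sum_sub_distrib]
  exact sum_congr rfl fun o _ => by ring
end

section
/- Robustness of the mediation estimating functional under submodel M_a (correct outcome regression and correct mediator density, arbitrary exposure model): if b̂(m,x) = E(Y|E=1,M=m,X=x) and f̂_M(m|e,x) = P(M=m|E=e,X=x) for all m ∈ 𝒮, e ∈ {0,1} and x with P(X=x) > 0, then for every function f̂_E : 𝒳 → (0,1), T(b̂, f̂_M, f̂_E) = θ0. -/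
/-!
On each stratum `{X = x, M = m, E = e}` the integrand of `T` is affine in `Y` with constant
coefficients, so `T` is a finite sum over strata. On exposed strata the weighted residual
`Y - b̂(M, X)` integrates to zero because `b̂` is the true outcome regression; on unexposed strata
`b̂(M, x) - η̂(x)` integrates to zero because `f̂_M(· | 0, x)` is the true mediator law and `η̂(x)`
is the corresponding mean of `b̂`. Neither cancellation involves `f̂_E`, and what remains is
`Σ_x η̂(x) P(X = x) = θ0`.
-/

open MeasureTheory ProbabilityTheory

open Finset

section Fibers

variable {Ω ι : Type*} [MeasurableSpace Ω] {μ : Measure Ω} [IsFiniteMeasure μ]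
  [Fintype ι] [MeasurableSpace ι] [MeasurableSingletonClass ι] {Z : Ω → ι}

theorem integral_comp_mul_add_comp_eq_sum (hZ : Measurable Z) {Y : Ω → ℝ}
    (hY : Integrable Y μ) (G K : ι → ℝ) :
    ∫ ω, (G (Z ω) * Y ω + K (Z ω)) ∂μ =
      ∑ i, (G i * ∫ ω in Z ⁻¹' {i}, Y ω ∂μ + K i * μ.real (Z ⁻¹' {i})) := by
  have hfiber (i : ι) : MeasurableSet (Z ⁻¹' {i}) := hZ (measurableSet_singleton i)
  have hconst (i : ι) : Set.EqOn (fun ω => G (Z ω) * Y ω + K (Z ω))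
      (fun ω => G i * Y ω + K i) (Z ⁻¹' {i}) := fun ω hω => by
    rw [Set.mem_preimage, Set.mem_singleton_iff] at hω
    simp only [hω]
  have hint (i : ι) : Integrable (fun ω => G i * Y ω + K i) μ :=
    (hY.const_mul _).add (integrable_const _)
  have hcover : ⋃ i, Z ⁻¹' {i} = Set.univ := by ext ω; simp
  rw [← setIntegral_univ, ← hcover, integral_iUnion_fintype hfiber (pairwise_disjoint_fiber Z)
    fun i => (hint i).integrableOn.congr_fun (hconst i).symm (hfiber i)]
  refine sum_congr rfl fun i _ => ?_
  rw [setIntegral_congr_fun (hfiber i) (hconst i),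
    integral_add (hY.integrableOn.const_mul _) (integrable_const _), integral_const_mul,
    setIntegral_const, smul_eq_mul, mul_comm (μ.real _)]

theorem sum_measureReal_preimage_singleton_inter (hZ : Measurable Z) (S : Set Ω) :
    ∑ i, μ.real (Z ⁻¹' {i} ∩ S) = μ.real S := by
  simpa [measureReal_restrict_apply (hZ (measurableSet_singleton _))] using
    sum_measureReal_preimage_singleton (μ := μ.restrict S) univ
      fun i _ => hZ (measurableSet_singleton i)

end Fibers

section Conditioning

variable {Ω : Type*} [MeasurableSpace Ω] {μ : Measure Ω}

theorem mul_measureReal_congr_of_ne_zero {a b : ℝ} {S T : Set Ω} (hST : S ⊆ T)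
    (h : μ T ≠ 0 → a = b) : a * μ.real S = b * μ.real S := by
  rcases eq_or_ne (μ T) 0 with hT | hT
  · simp [measureReal_def, measure_mono_null hST hT]
  · rw [h hT]

variable [IsFiniteMeasure μ]

theorem setIntegral_eq_cE_mul_measureReal (Y : Ω → ℝ) (A : Set Ω) :
    ∫ ω in A, Y ω ∂μ = cE μ Y A * μ.real A := by
  rcases eq_or_ne (μ A) 0 with hA | hA
  · simp [setIntegral_measure_zero Y hA, measureReal_def, hA]
  · rw [cE, measureReal_def, div_mul_cancel₀ _ (ENNReal.toReal_ne_zero.mpr ⟨hA, by finiteness⟩)]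

theorem measureReal_inter_eq_cP_mul_measureReal (B A : Set Ω) :
    μ.real (B ∩ A) = cP μ B A * μ.real A := by
  rcases eq_or_ne (μ A) 0 with hA | hA
  · simp [measureReal_def, measure_mono_null Set.inter_subset_right hA, hA]
  · rw [cP, measureReal_def, measureReal_def,
      div_mul_cancel₀ _ (ENNReal.toReal_ne_zero.mpr ⟨hA, by finiteness⟩)]

end Conditioning

section Mediation

variable {Ω 𝒳 𝒮 : Type*} [MeasurableSpace Ω] {μ : Measure Ω}
  {X : Ω → 𝒳} {M : Ω → 𝒮} {E : Ω → Bool} {Y : Ω → ℝ} {bhat : 𝒮 → 𝒳 → ℝ}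
  {fMhat : 𝒮 → Bool → 𝒳 → ℝ} {etahat : 𝒳 → ℝ}

/-- On the stratum `{X = x, M = m, E = e}` the integrand of `T` is
`mediationWeight … x m e * Y + mediationOffset … x m e`. -/
noncomputable def mediationWeight (fMhat : 𝒮 → Bool → 𝒳 → ℝ) (fEhat : 𝒳 → ℝ)
    (x : 𝒳) (m : 𝒮) (e : Bool) : ℝ :=
  (if e then 1 else 0) * fMhat m false x / (fEhat x * fMhat m true x)

noncomputable def mediationOffset (bhat : 𝒮 → 𝒳 → ℝ) (fMhat : 𝒮 → Bool → 𝒳 → ℝ)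
    (fEhat etahat : 𝒳 → ℝ) (x : 𝒳) (m : 𝒮) (e : Bool) : ℝ :=
  (if e then 0 else 1) / (1 - fEhat x) * (bhat m x - etahat x) + etahat x -
    mediationWeight fMhat fEhat x m e * bhat m x

theorem setIntegral_exposed_eq_bhat_mul [IsFiniteMeasure μ]
    (hb : ∀ (m : 𝒮) (x : 𝒳), μ (X ⁻¹' {x}) ≠ 0 →
      bhat m x = cE μ Y (E ⁻¹' {true} ∩ M ⁻¹' {m} ∩ X ⁻¹' {x})) (m : 𝒮) (x : 𝒳) :
    ∫ ω in E ⁻¹' {true} ∩ M ⁻¹' {m} ∩ X ⁻¹' {x}, Y ω ∂μ =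
      bhat m x * μ.real (E ⁻¹' {true} ∩ M ⁻¹' {m} ∩ X ⁻¹' {x}) := by
  rw [setIntegral_eq_cE_mul_measureReal]
  exact mul_measureReal_congr_of_ne_zero Set.inter_subset_right fun hx => (hb m x hx).symm

variable [Fintype 𝒮]

theorem sum_measureReal_inter_inter [MeasurableSpace 𝒮] [MeasurableSingletonClass 𝒮]
    [IsFiniteMeasure μ] (hE : Measurable E) (hM : Measurable M) (x : 𝒳) :
    ∑ m, ∑ e, μ.real (E ⁻¹' {e} ∩ M ⁻¹' {m} ∩ X ⁻¹' {x}) = μ.real (X ⁻¹' {x}) := by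
  simp_rw [Set.inter_assoc, sum_measureReal_preimage_singleton_inter hE,
    sum_measureReal_preimage_singleton_inter hM]

theorem sum_sub_eta_mul_measureReal_unexposed [MeasurableSpace 𝒮]
    [MeasurableSingletonClass 𝒮] [IsFiniteMeasure μ] (hM : Measurable M)
    (hetahat : ∀ x, etahat x = ∑ m : 𝒮, bhat m x * fMhat m false x)
    (hfM : ∀ (m : 𝒮) (e : Bool) (x : 𝒳), μ (X ⁻¹' {x}) ≠ 0 →
      fMhat m e x = cP μ (M ⁻¹' {m}) (E ⁻¹' {e} ∩ X ⁻¹' {x})) (x : 𝒳) :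
    ∑ m, (bhat m x - etahat x) * μ.real (E ⁻¹' {false} ∩ M ⁻¹' {m} ∩ X ⁻¹' {x}) = 0 := by
  have hdensity (m : 𝒮) : μ.real (M ⁻¹' {m} ∩ (E ⁻¹' {false} ∩ X ⁻¹' {x})) =
      fMhat m false x * μ.real (E ⁻¹' {false} ∩ X ⁻¹' {x}) := by
    rw [measureReal_inter_eq_cP_mul_measureReal]
    exact mul_measureReal_congr_of_ne_zero Set.inter_subset_right
      fun hx => (hfM m false x hx).symm
  simp_rw [Set.inter_assoc, Set.inter_left_comm _ (M ⁻¹' _), sub_mul, sum_sub_distrib,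
    ← mul_sum, sum_measureReal_preimage_singleton_inter hM, hdensity, ← mul_assoc, ← sum_mul,
    ← hetahat, sub_self]
theorem theta0_eq_sum_eta_mul [Fintype 𝒳]
    (hb : ∀ (m : 𝒮) (x : 𝒳), μ (X ⁻¹' {x}) ≠ 0 →
      bhat m x = cE μ Y (E ⁻¹' {true} ∩ M ⁻¹' {m} ∩ X ⁻¹' {x}))
    (hfM : ∀ (m : 𝒮) (e : Bool) (x : 𝒳), μ (X ⁻¹' {x}) ≠ 0 →
      fMhat m e x = cP μ (M ⁻¹' {m}) (E ⁻¹' {e} ∩ X ⁻¹' {x}))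
    (hetahat : ∀ x, etahat x = ∑ m : 𝒮, bhat m x * fMhat m false x) :
    theta0 μ X M E Y = ∑ x, etahat x * μ.real (X ⁻¹' {x}) := by
  classical
  rw [theta0, sum_comm]
  refine (sum_congr rfl fun x hx => ?_).trans (sum_filter_of_ne fun x _ hne => ?_)
  · rw [mem_filter] at hx
    simp_rw [hetahat, sum_mul, ← hb _ _ hx.2, ← hfM _ _ _ hx.2, measureReal_def]
  · exact fun hx => hne (by simp [measureReal_def, hx])


theorem sum_stratum_eq_eta_mul [MeasurableSpace 𝒮] [MeasurableSingletonClass 𝒮]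
    [IsFiniteMeasure μ] (hM : Measurable M) (hE : Measurable E) (fEhat : 𝒳 → ℝ)
    (hetahat : ∀ x, etahat x = ∑ m : 𝒮, bhat m x * fMhat m false x)
    (hb : ∀ (m : 𝒮) (x : 𝒳), μ (X ⁻¹' {x}) ≠ 0 →
      bhat m x = cE μ Y (E ⁻¹' {true} ∩ M ⁻¹' {m} ∩ X ⁻¹' {x}))
    (hfM : ∀ (m : 𝒮) (e : Bool) (x : 𝒳), μ (X ⁻¹' {x}) ≠ 0 →
      fMhat m e x = cP μ (M ⁻¹' {m}) (E ⁻¹' {e} ∩ X ⁻¹' {x})) (x : 𝒳) :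
    ∑ m, ∑ e, (mediationWeight fMhat fEhat x m e *
        ∫ ω in E ⁻¹' {e} ∩ M ⁻¹' {m} ∩ X ⁻¹' {x}, Y ω ∂μ +
      mediationOffset bhat fMhat fEhat etahat x m e *
        μ.real (E ⁻¹' {e} ∩ M ⁻¹' {m} ∩ X ⁻¹' {x})) =
      etahat x * μ.real (X ⁻¹' {x}) := by
  calc _ = ∑ m, ((bhat m x - etahat x) * μ.real (E ⁻¹' {false} ∩ M ⁻¹' {m} ∩ X ⁻¹' {x}) /
        (1 - fEhat x) + etahat x * ∑ e, μ.real (E ⁻¹' {e} ∩ M ⁻¹' {m} ∩ X ⁻¹' {x})) := by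
        refine sum_congr rfl fun m _ => ?_
        simp only [Fintype.sum_bool, mediationOffset, mediationWeight,
          setIntegral_exposed_eq_bhat_mul hb, if_true, Bool.false_eq_true, if_false]
        ring
    _ = etahat x * μ.real (X ⁻¹' {x}) := by
        rw [sum_add_distrib, ← sum_div, ← mul_sum,
          sum_sub_eta_mul_measureReal_unexposed hM hetahat hfM,
          sum_measureReal_inter_inter hE hM, zero_div, zero_add]

end Mediation

theorem robust_Ma_general
    {Ω 𝒳 𝒮 : Type*} [MeasurableSpace Ω] [Fintype 𝒳] [Fintype 𝒮]
    [MeasurableSpace 𝒳] [MeasurableSingletonClass 𝒳]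
    [MeasurableSpace 𝒮] [MeasurableSingletonClass 𝒮]
    (μ : Measure Ω) [IsProbabilityMeasure μ]
    (X : Ω → 𝒳) (M : Ω → 𝒮) (E : Ω → Bool) (Y : Ω → ℝ)
    (hX : Measurable X) (hM : Measurable M) (hE : Measurable E)
    (hY : Integrable Y μ)
    -- working models
    (bhat : 𝒮 → 𝒳 → ℝ) (fMhat : 𝒮 → Bool → 𝒳 → ℝ) (fEhat : 𝒳 → ℝ)
    (etahat : 𝒳 → ℝ)
    (hetahat : ∀ x, etahat x = ∑ m : 𝒮, bhat m x * fMhat m false x)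
    -- submodel M_a: correct outcome regression and correct mediator density
    (hb : ∀ (m : 𝒮) (x : 𝒳), μ (X ⁻¹' {x}) ≠ 0 →
      bhat m x = cE μ Y (E ⁻¹' {true} ∩ M ⁻¹' {m} ∩ X ⁻¹' {x}))
    (hfM : ∀ (m : 𝒮) (e : Bool) (x : 𝒳), μ (X ⁻¹' {x}) ≠ 0 →
      fMhat m e x = cP μ (M ⁻¹' {m}) (E ⁻¹' {e} ∩ X ⁻¹' {x})) :
    ∫ ω,
        ((if E ω then (1:ℝ) else 0) * fMhat (M ω) false (X ω) * (Y ω - bhat (M ω) (X ω)) /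
            (fEhat (X ω) * fMhat (M ω) true (X ω)) +
          (if E ω then (0:ℝ) else 1) / (1 - fEhat (X ω)) *
            (bhat (M ω) (X ω) - etahat (X ω)) +
          etahat (X ω)) ∂μ = theta0 μ X M E Y := by
  have hatom (x : 𝒳) (m : 𝒮) (e : Bool) :
      (fun ω => (X ω, M ω, E ω)) ⁻¹' {(x, m, e)} = E ⁻¹' {e} ∩ M ⁻¹' {m} ∩ X ⁻¹' {x} := by
    ext ω; simp [and_comm]
  calc _ = ∫ ω, (mediationWeight fMhat fEhat (X ω) (M ω) (E ω) * Y ω +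
        mediationOffset bhat fMhat fEhat etahat (X ω) (M ω) (E ω)) ∂μ := by
        congr 1; funext ω; simp only [mediationWeight, mediationOffset]; ring
    _ = ∑ x, etahat x * μ.real (X ⁻¹' {x}) := by
        rw [integral_comp_mul_add_comp_eq_sum (hX.prodMk (hM.prodMk hE)) hY
          (fun i => mediationWeight fMhat fEhat i.1 i.2.1 i.2.2)
          (fun i => mediationOffset bhat fMhat fEhat etahat i.1 i.2.1 i.2.2)]
        simp only [Fintype.sum_prod_type, hatom, sum_stratum_eq_eta_mul hM hE fEhat hetahat hb hfM]
    _ = theta0 μ X M E Y := (theta0_eq_sum_eta_mul hb hfM hetahat).symm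

/-- robustness of the mediation estimating functional under submodel
M_a: if the outcome regression and the mediator density are correct, then for every
exposure working model, `T(b̂, f̂_M, f̂_E) = θ0`. -/
theorem robust_Ma
    {Ω 𝒳 𝒮 : Type*} [MeasurableSpace Ω] [Fintype 𝒳] [Fintype 𝒮]
    [MeasurableSpace 𝒳] [MeasurableSingletonClass 𝒳]
    [MeasurableSpace 𝒮] [MeasurableSingletonClass 𝒮]
    (μ : Measure Ω) [IsProbabilityMeasure μ]
    (X : Ω → 𝒳) (M : Ω → 𝒮) (E : Ω → Bool) (Y : Ω → ℝ)
    (hX : Measurable X) (hM : Measurable M) (hE : Measurable E)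
    (hY : Integrable Y μ)
    (hposE : ∀ (e : Bool) (x : 𝒳), μ (X ⁻¹' {x}) ≠ 0 → μ (E ⁻¹' {e} ∩ X ⁻¹' {x}) ≠ 0)
    (hposM : ∀ (m : 𝒮) (e : Bool) (x : 𝒳), μ (X ⁻¹' {x}) ≠ 0 →
      μ (M ⁻¹' {m} ∩ E ⁻¹' {e} ∩ X ⁻¹' {x}) ≠ 0)
    -- working models
    (bhat : 𝒮 → 𝒳 → ℝ) (fMhat : 𝒮 → Bool → 𝒳 → ℝ) (fEhat : 𝒳 → ℝ)
    (hfM01 : ∀ m e x, fMhat m e x ∈ Set.Ioo (0:ℝ) 1)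
    (hfMsum : ∀ (e : Bool) (x : 𝒳), ∑ m : 𝒮, fMhat m e x = 1)
    (hfE01 : ∀ x, fEhat x ∈ Set.Ioo (0:ℝ) 1)
    (etahat : 𝒳 → ℝ)
    (hetahat : ∀ x, etahat x = ∑ m : 𝒮, bhat m x * fMhat m false x)
    -- submodel M_a: correct outcome regression and correct mediator density
    (hb : ∀ (m : 𝒮) (x : 𝒳), μ (X ⁻¹' {x}) ≠ 0 →
      bhat m x = cE μ Y (E ⁻¹' {true} ∩ M ⁻¹' {m} ∩ X ⁻¹' {x}))
    (hfM : ∀ (m : 𝒮) (e : Bool) (x : 𝒳), μ (X ⁻¹' {x}) ≠ 0 →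
      fMhat m e x = cP μ (M ⁻¹' {m}) (E ⁻¹' {e} ∩ X ⁻¹' {x})) :
    ∫ ω,
        ((if E ω then (1:ℝ) else 0) * fMhat (M ω) false (X ω) * (Y ω - bhat (M ω) (X ω)) /
            (fEhat (X ω) * fMhat (M ω) true (X ω)) +
          (if E ω then (0:ℝ) else 1) / (1 - fEhat (X ω)) *
            (bhat (M ω) (X ω) - etahat (X ω)) +
          etahat (X ω)) ∂μ = theta0 μ X M E Y :=
  robust_Ma_general μ X M E Y hX hM hE hY bhat fMhat fEhat etahat hetahat hb hfM
end

section
/- Robustness of the mediation estimating functional under submodel M_c (correct mediator density and correct exposure model, arbitrary outcome regression): if f̂_M(m|e,x) = P(M=m|E=e,X=x) and f̂_E(x) = P(E=1|X=x) for all m ∈ 𝒮, e ∈ {0,1} and x with P(X=x) > 0, then for every function b̂ : 𝒮×𝒳 → ℝ, T(b̂, f̂_M, f̂_E) = θ0. -/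
open MeasureTheory ProbabilityTheory

/-!
Split `Ω` into the strata `{M = m, E = e, X = x}`. On each stratum the integrand is an affine
function of `Y`, so its integral only involves `∫ Y` over the stratum and the stratum's
probability. With correct mediator and exposure models the weight
`f̂_M(m|0,x) / (f̂_E(x) f̂_M(m|1,x))` becomes
`P(M=m, E=0, X=x) P(X=x) / (P(E=0, X=x) P(M=m, E=1, X=x))`, which turns the `Y`-part into the
`θ0` summand; the `b̂`-terms then cancel between the two exposure arms, and the `η̂`-terms cancel
because `P(E=0 | X=x) / (1 - f̂_E(x)) = 1`.
-/

section Fibers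

variable {Ω α : Type*} [MeasurableSpace Ω] {μ : Measure Ω}
  [Fintype α] [MeasurableSpace α] [MeasurableSingletonClass α] {Z : Ω → α}

theorem integral_eq_sum_setIntegral_fiber_s11 (hZ : Measurable Z) {F : Ω → ℝ}
    (hF : Integrable F μ) : ∫ ω, F ω ∂μ = ∑ a, ∫ ω in Z ⁻¹' {a}, F ω ∂μ := by
  rw [← integral_iUnion_fintype (fun a => hZ (measurableSet_singleton a))
    (fun a b hab => Set.disjoint_singleton.2 hab |>.preimage Z) (fun _ => hF.integrableOn),
    show ⋃ a, Z ⁻¹' {a} = Set.univ by ext; simp, setIntegral_univ]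

theorem integral_comp_mul_add_comp_eq_sum_fiber [IsFiniteMeasure μ] (hZ : Measurable Z)
    {Y : Ω → ℝ} (hY : Integrable Y μ) (φ ψ : α → ℝ) :
    ∫ ω, (φ (Z ω) * Y ω + ψ (Z ω)) ∂μ =
      ∑ a, (φ a * ∫ ω in Z ⁻¹' {a}, Y ω ∂μ + ψ a * μ.real (Z ⁻¹' {a})) := by
  have hφ : Measurable (φ ∘ Z) := (measurable_of_finite φ).comp hZ
  rw [integral_eq_sum_setIntegral_fiber_s11 hZ ?_]
  · refine Finset.sum_congr rfl fun a _ => ?_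
    rw [setIntegral_congr_fun (hZ (measurableSet_singleton a))
      (g := fun ω => φ a * Y ω + ψ a) fun ω hω => by simp_all,
      integral_add (hY.integrableOn.const_mul _) integrableOn_const,
      integral_const_mul, setIntegral_const, smul_eq_mul, mul_comm (μ.real _)]
  · obtain ⟨C, hC⟩ := (Set.finite_range fun a => ‖φ a‖).bddAbove
    exact (hY.bdd_mul hφ.aestronglyMeasurable (.of_forall fun ω => hC ⟨Z ω, rfl⟩)).add
      ((Integrable.of_finite (μ := μ.map Z)).comp_measurable hZ)

theorem measureReal_eq_sum_fiber_inter [IsFiniteMeasure μ] (hZ : Measurable Z) (S : Set Ω) :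
    μ.real S = ∑ a, μ.real (Z ⁻¹' {a} ∩ S) := by
  have := sum_measureReal_preimage_singleton (μ := μ.restrict S) Finset.univ
    (fun a _ => hZ (measurableSet_singleton a))
  simp only [Finset.coe_univ, Set.preimage_univ, measureReal_restrict_apply_univ] at this
  rw [← this]
  refine Finset.sum_congr rfl fun a _ => ?_
  rw [measureReal_restrict_apply (hZ (measurableSet_singleton a))]

end Fibers

theorem sum_ipw_strata {ι : Type*} [Fintype ι] (p₁ p₀ I b : ι → ℝ) {P₁ P₀ P : ℝ} (η : ℝ)
    (hp₁ : ∀ i, p₁ i ≠ 0) (hP₁ : ∑ i, p₁ i = P₁) (hP₀ : ∑ i, p₀ i = P₀) (hP : P₁ + P₀ = P)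
    (hP₁0 : P₁ ≠ 0) (hP₀0 : P₀ ≠ 0) (hP0 : P ≠ 0) :
    ∑ i, (p₀ i / P₀ / (P₁ / P * (p₁ i / P₁)) * I i
        + (η - p₀ i / P₀ / (P₁ / P * (p₁ i / P₁)) * b i) * p₁ i
        + ((b i - η) / (1 - P₁ / P) + η) * p₀ i)
      = ∑ i, I i / p₁ i * (p₀ i / P₀) * P := by
  have h1 : 1 - P₁ / P = P₀ / P := by field_simp; linarith
  have hterm : ∀ i, p₀ i / P₀ / (P₁ / P * (p₁ i / P₁)) * I i
        + (η - p₀ i / P₀ / (P₁ / P * (p₁ i / P₁)) * b i) * p₁ i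
        + ((b i - η) / (1 - P₁ / P) + η) * p₀ i
      = I i / p₁ i * (p₀ i / P₀) * P + η * (p₁ i + p₀ i - P / P₀ * p₀ i) := by
    intro i
    rw [h1]
    have := hp₁ i
    field_simp
    ring
  have hη : ∑ i, η * (p₁ i + p₀ i - P / P₀ * p₀ i) = 0 := by
    rw [← Finset.mul_sum, Finset.sum_sub_distrib, Finset.sum_add_distrib, ← Finset.mul_sum,
      hP₁, hP₀, div_mul_cancel₀ _ hP₀0, hP, sub_self, mul_zero]
  simp only [hterm, Finset.sum_add_distrib, hη, add_zero]

theorem sum_strata_eq_of_correct_models {Ω 𝒮 : Type*} [MeasurableSpace Ω] {μ : Measure Ω}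
    [IsFiniteMeasure μ] [Fintype 𝒮] [MeasurableSpace 𝒮] [MeasurableSingletonClass 𝒮]
    {M : Ω → 𝒮} {E : Ω → Bool}
    (hM : Measurable M) (hE : Measurable E) (Y : Ω → ℝ) {A : Set Ω} (hA : μ A ≠ 0)
    (hposE : ∀ e, μ (E ⁻¹' {e} ∩ A) ≠ 0) (hposM : ∀ m, μ (M ⁻¹' {m} ∩ E ⁻¹' {true} ∩ A) ≠ 0)
    {fM : 𝒮 → Bool → ℝ} {fE : ℝ} (b : 𝒮 → ℝ) (η : ℝ)
    (hfM : ∀ m e, fM m e = cP μ (M ⁻¹' {m}) (E ⁻¹' {e} ∩ A)) (hfE : fE = cP μ (E ⁻¹' {true}) A) :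
    ∑ m, (fM m false / (fE * fM m true) * ∫ ω in M ⁻¹' {m} ∩ (E ⁻¹' {true} ∩ A), Y ω ∂μ
        + (η - fM m false / (fE * fM m true) * b m) * μ.real (M ⁻¹' {m} ∩ (E ⁻¹' {true} ∩ A))
        + ((b m - η) / (1 - fE) + η) * μ.real (M ⁻¹' {m} ∩ (E ⁻¹' {false} ∩ A)))
      = ∑ m, cE μ Y (E ⁻¹' {true} ∩ M ⁻¹' {m} ∩ A) * cP μ (M ⁻¹' {m}) (E ⁻¹' {false} ∩ A)
          * μ.real A := by
  simp only [hfM, hfE, cP, cE, ← measureReal_def, Set.inter_assoc,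
    Set.inter_left_comm (E ⁻¹' _)]
  refine sum_ipw_strata _ _ _ b η
    (fun m => (measureReal_ne_zero_iff (by finiteness)).2 (Set.inter_assoc .. ▸ hposM m))
    (measureReal_eq_sum_fiber_inter hM _).symm (measureReal_eq_sum_fiber_inter hM _).symm ?_
    ?_ ?_ ?_
  · rw [measureReal_eq_sum_fiber_inter hE A, Fintype.sum_bool]
  · exact (measureReal_ne_zero_iff (by finiteness)).2 (hposE true)
  · exact (measureReal_ne_zero_iff (by finiteness)).2 (hposE false)
  · exact (measureReal_ne_zero_iff (by finiteness)).2 hA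

theorem robust_Mc_general
    {Ω 𝒳 𝒮 : Type*} [MeasurableSpace Ω] [Fintype 𝒳] [Fintype 𝒮]
    [MeasurableSpace 𝒳] [MeasurableSingletonClass 𝒳]
    [MeasurableSpace 𝒮] [MeasurableSingletonClass 𝒮]
    (μ : Measure Ω) [IsProbabilityMeasure μ]
    (X : Ω → 𝒳) (M : Ω → 𝒮) (E : Ω → Bool) (Y : Ω → ℝ)
    (hX : Measurable X) (hM : Measurable M) (hE : Measurable E)
    (hY : Integrable Y μ)
    (hposE : ∀ (e : Bool) (x : 𝒳), μ (X ⁻¹' {x}) ≠ 0 → μ (E ⁻¹' {e} ∩ X ⁻¹' {x}) ≠ 0)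
    (hposM : ∀ (m : 𝒮) (e : Bool) (x : 𝒳), μ (X ⁻¹' {x}) ≠ 0 →
      μ (M ⁻¹' {m} ∩ E ⁻¹' {e} ∩ X ⁻¹' {x}) ≠ 0)
    -- working models
    (bhat : 𝒮 → 𝒳 → ℝ) (fMhat : 𝒮 → Bool → 𝒳 → ℝ) (fEhat : 𝒳 → ℝ)
    (etahat : 𝒳 → ℝ)
    -- submodel M_c: correct mediator density and correct exposure model
    (hfM : ∀ (m : 𝒮) (e : Bool) (x : 𝒳), μ (X ⁻¹' {x}) ≠ 0 →
      fMhat m e x = cP μ (M ⁻¹' {m}) (E ⁻¹' {e} ∩ X ⁻¹' {x}))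
    (hfE : ∀ x : 𝒳, μ (X ⁻¹' {x}) ≠ 0 → fEhat x = cP μ (E ⁻¹' {true}) (X ⁻¹' {x})) :
    ∫ ω,
        ((if E ω then (1:ℝ) else 0) * fMhat (M ω) false (X ω) * (Y ω - bhat (M ω) (X ω)) /
            (fEhat (X ω) * fMhat (M ω) true (X ω)) +
          (if E ω then (0:ℝ) else 1) / (1 - fEhat (X ω)) *
            (bhat (M ω) (X ω) - etahat (X ω)) +
          etahat (X ω)) ∂μ = theta0 μ X M E Y := by
  set φ : 𝒳 × 𝒮 × Bool → ℝ := fun a =>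
    if a.2.2 then fMhat a.2.1 false a.1 / (fEhat a.1 * fMhat a.2.1 true a.1) else 0 with hφ
  set ψ : 𝒳 × 𝒮 × Bool → ℝ := fun a =>
    if a.2.2 then etahat a.1 - φ a * bhat a.2.1 a.1
    else (bhat a.2.1 a.1 - etahat a.1) / (1 - fEhat a.1) + etahat a.1 with hψ
  have hZ : Measurable fun ω => (X ω, M ω, E ω) := hX.prodMk (hM.prodMk hE)
  have hstratum : ∀ x m e, (fun ω => (X ω, M ω, E ω)) ⁻¹' {(x, m, e)} =
      M ⁻¹' {m} ∩ (E ⁻¹' {e} ∩ X ⁻¹' {x}) := by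
    intro x m e
    ext ω
    simp only [Set.mem_preimage, Set.mem_singleton_iff, Prod.mk.injEq, Set.mem_inter_iff]
    tauto
  rw [integral_congr_ae (g := fun ω => φ (X ω, M ω, E ω) * Y ω + ψ (X ω, M ω, E ω))
    (.of_forall fun ω => by cases hEω : E ω <;> simp [hφ, hψ, hEω] <;> ring),
    integral_comp_mul_add_comp_eq_sum_fiber hZ hY, theta0, Finset.sum_comm, Finset.sum_filter]
  simp only [Fintype.sum_prod_type, Fintype.sum_bool, hstratum, hφ, hψ, Bool.false_eq_true,
    ↓reduceIte, zero_mul, zero_add]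
  refine Finset.sum_congr rfl fun x _ => ?_
  split_ifs with hx
  · exact sum_strata_eq_of_correct_models hM hE Y hx (hposE · x hx) (hposM · true x hx)
      (bhat · x) (etahat x) (hfM · · x hx) (hfE x hx)
  · have hnull : ∀ m e, μ (M ⁻¹' {m} ∩ (E ⁻¹' {e} ∩ X ⁻¹' {x})) = 0 := fun m e =>
      measure_mono_null (Set.inter_subset_right.trans Set.inter_subset_right) (not_not.1 hx)
    simp [hnull, measureReal_def]

/-- robustness of the mediation estimating functional under submodel
M_c: if the mediator density and the exposure model are correct, then for every
outcome-regression working model, `T(b̂, f̂_M, f̂_E) = θ0`. -/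
theorem robust_Mc
    {Ω 𝒳 𝒮 : Type*} [MeasurableSpace Ω] [Fintype 𝒳] [Fintype 𝒮]
    [MeasurableSpace 𝒳] [MeasurableSingletonClass 𝒳]
    [MeasurableSpace 𝒮] [MeasurableSingletonClass 𝒮]
    (μ : Measure Ω) [IsProbabilityMeasure μ]
    (X : Ω → 𝒳) (M : Ω → 𝒮) (E : Ω → Bool) (Y : Ω → ℝ)
    (hX : Measurable X) (hM : Measurable M) (hE : Measurable E)
    (hY : Integrable Y μ)
    (hposE : ∀ (e : Bool) (x : 𝒳), μ (X ⁻¹' {x}) ≠ 0 → μ (E ⁻¹' {e} ∩ X ⁻¹' {x}) ≠ 0)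
    (hposM : ∀ (m : 𝒮) (e : Bool) (x : 𝒳), μ (X ⁻¹' {x}) ≠ 0 →
      μ (M ⁻¹' {m} ∩ E ⁻¹' {e} ∩ X ⁻¹' {x}) ≠ 0)
    -- working models
    (bhat : 𝒮 → 𝒳 → ℝ) (fMhat : 𝒮 → Bool → 𝒳 → ℝ) (fEhat : 𝒳 → ℝ)
    (hfM01 : ∀ m e x, fMhat m e x ∈ Set.Ioo (0:ℝ) 1)
    (hfMsum : ∀ (e : Bool) (x : 𝒳), ∑ m : 𝒮, fMhat m e x = 1)
    (hfE01 : ∀ x, fEhat x ∈ Set.Ioo (0:ℝ) 1)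
    (etahat : 𝒳 → ℝ)
    (hetahat : ∀ x, etahat x = ∑ m : 𝒮, bhat m x * fMhat m false x)
    -- submodel M_c: correct mediator density and correct exposure model
    (hfM : ∀ (m : 𝒮) (e : Bool) (x : 𝒳), μ (X ⁻¹' {x}) ≠ 0 →
      fMhat m e x = cP μ (M ⁻¹' {m}) (E ⁻¹' {e} ∩ X ⁻¹' {x}))
    (hfE : ∀ x : 𝒳, μ (X ⁻¹' {x}) ≠ 0 → fEhat x = cP μ (E ⁻¹' {true}) (X ⁻¹' {x})) :
    ∫ ω,
        ((if E ω then (1:ℝ) else 0) * fMhat (M ω) false (X ω) * (Y ω - bhat (M ω) (X ω)) /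
            (fEhat (X ω) * fMhat (M ω) true (X ω)) +
          (if E ω then (0:ℝ) else 1) / (1 - fEhat (X ω)) *
            (bhat (M ω) (X ω) - etahat (X ω)) +
          etahat (X ω)) ∂μ = theta0 μ X M E Y :=
  robust_Mc_general μ X M E Y hX hM hE hY hposE hposM bhat fMhat fEhat etahat hfM hfE
end

section
/- Algebraic identity and boundedness for the shifted-logit inverse-propensity weights: let n ≥ 1 and for i = 1,…,n let E_i ∈ {0,1}, R_i ∈ ℝ and p_i ∈ (0,1); write Ē := (1/n)Σ_i E_i and assume Ē < 1 and Σ_i E_i(1−p_i)/p_i > 0. Define C := −log(1−Ē) + log((1/n)Σ_i E_i(1−p_i)/p_i) and p†_i ∈ (0,1) by p†_i/(1−p†_i) = e^C · p_i/(1−p_i). Then (1/n)Σ_i E_i R_i / p†_i = [ Σ_i E_i R_i (1−p_i)/p_i / Σ_j E_j (1−p_j)/p_j ]·(1−Ē) + (1/n)Σ_i E_i R_i, and consequently | (1/n)Σ_i E_i R_i / p†_i | ≤ 2·max_{1≤i≤n} |R_i|. -/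
/-- algebraic identity and boundedness for the shifted-logit
inverse-propensity weights: with `C := −log(1−Ē) + log((1/n)Σ_i E_i(1−p_i)/p_i)` and
`logit(p†_i) = logit(p_i) + C`, the weighted average `(1/n)Σ_i E_i R_i / p†_i` equals a
convex-combination expression and is bounded by `2·max_i |R_i|`. -/
theorem shifted_logit_weights_identity_and_bound
    (n : ℕ) (hn : 0 < n) (E R p pdag : Fin n → ℝ)
    (hE : ∀ i, E i = 0 ∨ E i = 1)
    (hp : ∀ i, p i ∈ Set.Ioo (0:ℝ) 1)
    (hEbar : (∑ i, E i) / (n : ℝ) < 1)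
    (hSpos : 0 < ∑ i, E i * ((1 - p i) / p i))
    (C : ℝ)
    (hC : C = -Real.log (1 - (∑ i, E i) / (n : ℝ)) +
      Real.log ((1 / (n : ℝ)) * ∑ i, E i * ((1 - p i) / p i)))
    (hpdag01 : ∀ i, pdag i ∈ Set.Ioo (0:ℝ) 1)
    (hpdag : ∀ i, pdag i / (1 - pdag i) = Real.exp C * (p i / (1 - p i))) :
    ((1 / (n : ℝ)) * ∑ i, E i * R i / pdag i =
      (∑ i, E i * R i * ((1 - p i) / p i)) / (∑ j, E j * ((1 - p j) / p j)) *
          (1 - (∑ i, E i) / (n : ℝ)) +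
        (1 / (n : ℝ)) * ∑ i, E i * R i) ∧
    |(1 / (n : ℝ)) * ∑ i, E i * R i / pdag i| ≤
      2 * Finset.univ.sup'
        (Finset.univ_nonempty_iff.mpr (Fin.pos_iff_nonempty.mp hn))
        (fun i => |R i|) := by
  have hn' : (0:ℝ) < n := Nat.cast_pos.mpr hn
  have h1E : 0 < 1 - (∑ i, E i) / (n : ℝ) := by linarith
  have hSn : 0 < (1 / (n : ℝ)) * ∑ i, E i * ((1 - p i) / p i) := by positivity
  have hexp : Real.exp (-C)
      = (1 - (∑ i, E i) / (n : ℝ)) / ((1 / (n : ℝ)) * ∑ i, E i * ((1 - p i) / p i)) := by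
    rw [hC, neg_add, neg_neg, Real.exp_add, Real.exp_log h1E, Real.exp_neg, Real.exp_log hSn]
    ring
  have hinv : ∀ i, 1 / pdag i = 1 + Real.exp (-C) * ((1 - p i) / p i) := by
    intro i
    obtain ⟨hp0, hp1⟩ := hp i
    obtain ⟨hd0, hd1⟩ := hpdag01 i
    have h := hpdag i
    have hp1' : (1:ℝ) - p i ≠ 0 := by linarith
    have hd1' : (1:ℝ) - pdag i ≠ 0 := by linarith
    have h' : pdag i * (1 - p i) = Real.exp C * (p i * (1 - pdag i)) := by
      field_simp at h
      linarith [h]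
    rw [Real.exp_neg]
    have hec : (0:ℝ) < Real.exp C := Real.exp_pos C
    field_simp
    nlinarith [h']
  have key : (1 / (n : ℝ)) * ∑ i, E i * R i / pdag i =
      (∑ i, E i * R i * ((1 - p i) / p i)) / (∑ j, E j * ((1 - p j) / p j)) *
          (1 - (∑ i, E i) / (n : ℝ)) +
        (1 / (n : ℝ)) * ∑ i, E i * R i := by
    have hterm : ∀ i, E i * R i / pdag i
        = E i * R i + Real.exp (-C) * (E i * R i * ((1 - p i) / p i)) := by
      intro i
      rw [div_eq_mul_one_div, hinv i]; ring
    simp_rw [hterm]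
    rw [Finset.sum_add_distrib, ← Finset.mul_sum, hexp]
    have hS' : (∑ j, E j * ((1 - p j) / p j)) ≠ 0 := ne_of_gt hSpos
    set S := ∑ j, E j * ((1 - p j) / p j) with hSdef
    set T := ∑ i, E i * R i * ((1 - p i) / p i) with hTdef
    set A := ∑ i, E i * R i with hAdef
    set B := (∑ i, E i) / (n : ℝ) with hBdef
    have hn'' : (n:ℝ) ≠ 0 := ne_of_gt hn'
    field_simp
    ring
  refine ⟨key, ?_⟩
  rw [key]
  have hRM : ∀ i : Fin n, |R i| ≤ Finset.univ.sup'
      (Finset.univ_nonempty_iff.mpr (Fin.pos_iff_nonempty.mp hn)) (fun i => |R i|) :=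
    fun i => Finset.le_sup' (fun j => |R j|) (Finset.mem_univ i)
  set M := Finset.univ.sup'
      (Finset.univ_nonempty_iff.mpr (Fin.pos_iff_nonempty.mp hn)) (fun i => |R i|) with hMdef
  have hM0 : 0 ≤ M := le_trans (abs_nonneg _) (hRM ⟨0, hn⟩)
  have hE0 : ∀ i, 0 ≤ E i := fun i => by rcases hE i with h | h <;> simp [h]
  have hEbar0 : (0:ℝ) ≤ (∑ i, E i) / (n : ℝ) :=
    div_nonneg (Finset.sum_nonneg fun i _ => hE0 i) (le_of_lt hn')
  have hratio : ∀ i, 0 ≤ (1 - p i) / p i := fun i => by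
    obtain ⟨hp0, hp1⟩ := hp i
    exact div_nonneg (by linarith) (le_of_lt hp0)
  have hTb : |∑ i, E i * R i * ((1 - p i) / p i)| ≤ M * ∑ i, E i * ((1 - p i) / p i) := by
    calc |∑ i, E i * R i * ((1 - p i) / p i)|
        ≤ ∑ i, |E i * R i * ((1 - p i) / p i)| := Finset.abs_sum_le_sum_abs _ _
      _ ≤ ∑ i, M * (E i * ((1 - p i) / p i)) := by
          refine Finset.sum_le_sum fun i _ => ?_
          rcases hE i with h | h
          · simp [h]
          · rw [h, one_mul, one_mul, abs_mul, abs_of_nonneg (hratio i)]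
            exact mul_le_mul_of_nonneg_right (hRM i) (hratio i)
      _ = M * ∑ i, E i * ((1 - p i) / p i) := by rw [Finset.mul_sum]
  have hERb : |∑ i, E i * R i| ≤ M * ∑ i, E i := by
    calc |∑ i, E i * R i| ≤ ∑ i, |E i * R i| := Finset.abs_sum_le_sum_abs _ _
      _ ≤ ∑ i, M * E i := by
          refine Finset.sum_le_sum fun i _ => ?_
          rcases hE i with h | h
          · simp [h]
          · rw [h, one_mul, mul_one]; exact hRM i
      _ = M * ∑ i, E i := by rw [Finset.mul_sum]
  have h1 : |(∑ i, E i * R i * ((1 - p i) / p i)) / (∑ j, E j * ((1 - p j) / p j)) *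
      (1 - (∑ i, E i) / (n : ℝ))| ≤ M * (1 - (∑ i, E i) / (n : ℝ)) := by
    rw [abs_mul, abs_of_pos h1E, abs_div, abs_of_pos hSpos]
    refine mul_le_mul_of_nonneg_right ?_ (le_of_lt h1E)
    rw [div_le_iff₀ hSpos]
    exact hTb
  have h2 : |(1 / (n : ℝ)) * ∑ i, E i * R i| ≤ M * ((∑ i, E i) / (n : ℝ)) := by
    rw [abs_mul, abs_of_pos (by positivity : (0:ℝ) < 1 / (n:ℝ))]
    calc (1 / (n : ℝ)) * |∑ i, E i * R i| ≤ (1 / (n : ℝ)) * (M * ∑ i, E i) :=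
          mul_le_mul_of_nonneg_left hERb (by positivity)
      _ = M * ((∑ i, E i) / (n : ℝ)) := by ring
  calc |(∑ i, E i * R i * ((1 - p i) / p i)) / (∑ j, E j * ((1 - p j) / p j)) *
          (1 - (∑ i, E i) / (n : ℝ)) + (1 / (n : ℝ)) * ∑ i, E i * R i|
      ≤ |(∑ i, E i * R i * ((1 - p i) / p i)) / (∑ j, E j * ((1 - p j) / p j)) *
          (1 - (∑ i, E i) / (n : ℝ))| + |(1 / (n : ℝ)) * ∑ i, E i * R i| := abs_add_le _ _
    _ ≤ M * (1 - (∑ i, E i) / (n : ℝ)) + M * ((∑ i, E i) / (n : ℝ)) := add_le_add h1 h2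
    _ = M := by ring
    _ ≤ 2 * M := by linarith
end
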